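/- arXiv:1007.1938 — 7 statements merged into one kernel-verified Lean document; each statement's English description precedes it below -/
import Mathlib

section
/- If two quadratic MRS functions in n variables are affine equivalent, then there is a permutation of the n variables which gives the equivalence; that is, if f_{n,r} and f_{n,s} (with 2 ≤ r, s ≤ ⌊(n+1)/2⌋, or the short quadratic function when n is even) are affine equivalent, then there exists a permutation ξ of {1,...,n} such that f_{n,s}(x_1,...,x_n) = f_{n,r}(x_{ξ(1)},...,x_{ξ(n)}). -/
/-- Boolean functions in `n` variables, with variables indexed by `ZMod n`
(index `i : ZMod n` corresponds to the variable `x_{i+1}` in 1-indexed notation). -/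
abbrev BF (n : ℕ) := (ZMod n → ZMod 2) → ZMod 2

/-- Affine equivalence of Boolean functions: `g x = f (A x + b)` for some invertible
matrix `A` over `GF(2)` and some vector `b`. -/
def affEquiv {n : ℕ} [NeZero n] (f g : BF n) : Prop :=
  ∃ (A : Matrix (ZMod n) (ZMod n) (ZMod 2)) (b : ZMod n → ZMod 2),
    IsUnit A ∧ ∀ x, g x = f (A.mulVec x + b)

/-- The quadratic MRS function `f_{n,j}(x) = Σ_{i=1}^n x_i x_{(i+j-1) Mod n}`. -/
def quadMRS (n : ℕ) [NeZero n] (j : ℕ) : BF n :=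
  fun x => ∑ i : ZMod n, x i * x (i + ((j - 1 : ℕ) : ZMod n))

/-- The short quadratic function `Σ_{i=1}^{n/2} x_i x_{i+n/2}` (for even `n`). -/
def shortQuad (n : ℕ) [NeZero n] : BF n :=
  fun x => ∑ i ∈ Finset.range (n / 2),
    x ((i : ℕ) : ZMod n) * x (((i : ℕ) : ZMod n) + ((n / 2 : ℕ) : ZMod n))

/-- `f` is a quadratic MRS function in `n` variables: either `f_{n,j}` for some
`2 ≤ j ≤ ⌊(n+1)/2⌋`, or (for even `n`) the short quadratic function. -/
def IsQuadMRS (n : ℕ) [NeZero n] (f : BF n) : Prop :=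
  (∃ j : ℕ, 2 ≤ j ∧ j ≤ (n + 1) / 2 ∧ f = quadMRS n j) ∨ (Even n ∧ f = shortQuad n)

/-!
An affine equivalence `g x = f (A x + b)` carries the linear structures of `g` (the `v` for which
`x ↦ g (x + v) - g x` is constant) onto those of `f` through `A`, and likewise its periods. So
the number of linear structures, and whether every linear structure is a period, are affine
invariants. For `f_{n,j} = ∑ xᵢ x_{i+s}` with `s = j - 1` the linear structures are the
functions of period `2s`, so there are `2 ^ [ZMod n : ⟨2s⟩]` of them, and they are all periods
exactly when the additive order of `s` is even. These two invariants determine the order of `s`;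
elements of `ZMod n` of equal order differ by a unit `u`, and `i ↦ u * i` is the permutation.
The short quadratic function has `0` as its only linear structure, so it is equivalent to no
`f_{n,j}`.
-/

open Function

section LinearStructures

variable {V W M : Type*} [AddCommGroup V] [AddCommGroup W] [AddCommGroup M]

def linearStructures (f : V → M) : Set V := {v | ∃ c, ∀ x, f (x + v) - f x = c}

def periods {X : Type*} (f : V → X) : Set V := {v | Periodic f v}

lemma mem_periods_iff_mem_linearStructures {f : V → M} {v : V} :
    v ∈ periods f ↔ v ∈ linearStructures f ∧ f v = f 0 := by
  constructor
  · intro hv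
    exact ⟨⟨0, fun x => sub_eq_zero.mpr (hv x)⟩, by simpa using hv 0⟩
  · rintro ⟨⟨c, hc⟩, h0⟩ x
    have hc0 : c = 0 := by simpa [h0] using (hc 0).symm
    exact sub_eq_zero.mp (hc0 ▸ hc x)

lemma periods_subset_linearStructures (f : V → M) : periods f ⊆ linearStructures f :=
  fun _ hv => (mem_periods_iff_mem_linearStructures.mp hv).1

lemma mem_linearStructures_iff_of_sub_eq_dotProduct {ι R : Type*} [Fintype ι] [Ring R]
    {f : (ι → R) → R} {v w : ι → R} {c : R} (hf : ∀ x, f (x + v) - f x = x ⬝ᵥ w + c) :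
    v ∈ linearStructures f ↔ w = 0 := by
  classical
  refine ⟨fun ⟨c', hc'⟩ => funext fun i => ?_, fun hw => ⟨c, fun x => by simp [hf, hw]⟩⟩
  have h0 := (hf 0).symm.trans (hc' 0)
  have hi := (hf (Pi.single i 1)).symm.trans (hc' (Pi.single i 1))
  rw [zero_dotProduct, zero_add] at h0
  rwa [single_dotProduct, one_mul, ← h0, add_eq_right] at hi

lemma linearStructures_comp_affine (f : W → M) {A : V →+ W} (hA : Surjective A) (b : W) :
    linearStructures (fun x => f (A x + b)) = A ⁻¹' linearStructures f := by
  ext v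
  simp only [linearStructures, Set.mem_ofPred_eq, Set.mem_preimage, map_add,
    add_right_comm _ (A v) b]
  exact exists_congr fun c =>
    ((Equiv.addRight b).surjective.comp hA).forall (p := fun y => f (y + A v) - f y = c) |>.symm

lemma periods_comp_affine {X : Type*} (f : W → X) {A : V →+ W} (hA : Surjective A) (b : W) :
    periods (fun x => f (A x + b)) = A ⁻¹' periods f := by
  ext v
  simp only [periods, Periodic, Set.mem_ofPred_eq, Set.mem_preimage, map_add,
    add_right_comm _ (A v) b]
  exact ((Equiv.addRight b).surjective.comp hA).forall (p := fun y => f (y + A v) = f y) |>.symm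

end LinearStructures

section PeriodicFunctions

variable {G : Type*} [AddGroup G]

lemma ncard_setOf_periodic {X : Type*} [Finite G] (k : G) :
    {v : G → X | Periodic v k}.ncard = Nat.card X ^ (AddSubgroup.zmultiples k).index := by
  rw [← Nat.card_coe_set_eq, AddSubgroup.index, ← Nat.card_fun]
  refine Nat.card_congr ((Equiv.subtypeEquivRight fun v => ?_).trans
    (Setoid.liftEquiv (QuotientAddGroup.leftRel _)))
  simp only [Set.mem_ofPred_eq]
  constructor
  · intro hv x y hxy
    rw [QuotientAddGroup.leftRel_apply, AddSubgroup.mem_zmultiples_iff] at hxy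
    obtain ⟨m, hm⟩ := hxy
    rw [Setoid.ker_def, ← add_neg_cancel_left x y, ← hm]
    exact (hv.zsmul m x).symm
  · intro hv x
    exact (hv (QuotientAddGroup.leftRel_apply.mpr (by simp))).symm

lemma sum_eq_zero_of_periodic_of_add_self_eq_zero [Fintype G] {R : Type*} [Ring R] [CharP R 2]
    {a : G → R} {e : G} (ha : Periodic a e) (he : e + e = 0) (he₀ : e ≠ 0) :
    ∑ i, a i = 0 :=
  Finset.sum_ninvolution (· + e) (fun i => by rw [ha, CharTwo.add_self_eq_zero])
    (fun _ _ => by simpa using he₀) (fun _ => Finset.mem_univ _)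
    (fun i => by rw [add_assoc, he, add_zero])

end PeriodicFunctions

lemma addOrderOf_eq_of_addOrderOf_two_nsmul_eq {A : Type*} [AddMonoid A] {a b : A}
    (h₂ : addOrderOf (2 • a) = addOrderOf (2 • b))
    (hpar : Even (addOrderOf a) ↔ Even (addOrderOf b)) : addOrderOf a = addOrderOf b := by
  have htwo : ∀ x : A, addOrderOf (2 • x) =
      if Even (addOrderOf x) then addOrderOf x / 2 else addOrderOf x := fun x => by
    rw [addOrderOf_nsmul' x two_ne_zero]
    split_ifs with hx
    · rw [Nat.gcd_eq_right (even_iff_two_dvd.mp hx)]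
    · rw [Nat.Coprime.gcd_eq_one (Nat.not_even_iff_odd.mp hx).coprime_two_right, Nat.div_one]
  rw [htwo, htwo] at h₂
  by_cases ha : Even (addOrderOf a)
  · have hb := hpar.mp ha
    rw [if_pos ha, if_pos hb] at h₂
    obtain ⟨k, hk⟩ := ha
    obtain ⟨l, hl⟩ := hb
    omega
  · rwa [if_neg ha, if_neg (mt hpar.mpr ha)] at h₂

namespace ZMod

variable {n : ℕ} [NeZero n]

lemma exists_unit_mul_eq_of_addOrderOf_eq {a b : ZMod n} (h : addOrderOf a = addOrderOf b) :
    ∃ u : (ZMod n)ˣ, u * a = b := by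
  have hdecomp : ∀ c : ZMod n,
      ∃ u : (ZMod n)ˣ, ∃ d : ℕ, d ∣ n ∧ c = u * d ∧ addOrderOf c = n / d := by
    intro c
    obtain ⟨d, hd, u, hu, rfl⟩ := eq_unit_mul_divisor c
    refine ⟨hu.unit, d, hd, rfl, ?_⟩
    refine (addOrderOf_injective (AddMonoidHom.mulLeft u) hu.mul_right_injective _).trans ?_
    rw [addOrderOf_coe d (NeZero.ne n), Nat.gcd_eq_right hd]
  obtain ⟨u, d, hd, rfl, hda⟩ := hdecomp a
  obtain ⟨u', d', hd', rfl, hdb⟩ := hdecomp b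
  obtain rfl : d = d' := (Nat.div_eq_iff_eq_of_dvd_dvd (NeZero.ne n) hd hd').mp
    (hda.symm.trans (h.trans hdb))
  exact ⟨u' * u⁻¹, by simp [mul_assoc]⟩

lemma sum_eq_sum_range {M : Type*} [AddCommMonoid M] (F : ZMod n → M) :
    ∑ j, F j = ∑ i ∈ Finset.range n, F i := by
  obtain ⟨m, rfl⟩ := Nat.exists_eq_succ_of_ne_zero (NeZero.ne n)
  rw [← Fin.sum_univ_eq_sum_range (fun i => F i) (m + 1)]
  exact Finset.sum_congr rfl fun x _ => congrArg F (natCast_zmod_val x).symm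

lemma sum_eq_sum_range_halves {M : Type*} [AddCommMonoid M] {m : ℕ} (hn : n = m + m)
    (F : ZMod n → M) : ∑ j, F j = ∑ i ∈ Finset.range m, (F i + F (i + m)) := by
  rw [sum_eq_sum_range, show Finset.range n = Finset.range (m + m) by rw [hn],
    Finset.sum_range_add, ← Finset.sum_add_distrib]
  simp [add_comm]

end ZMod

section CyclicQuad

variable {G : Type*} [AddCommGroup G] [Fintype G]

def cyclicQuad (s : G) (x : G → ZMod 2) : ZMod 2 := ∑ i, x i * x (i + s)

lemma quadMRS_eq_cyclicQuad (n : ℕ) [NeZero n] (j : ℕ) :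
    quadMRS n j = cyclicQuad ((j - 1 : ℕ) : ZMod n) := rfl

lemma cyclicQuad_zero (s : G) : cyclicQuad s 0 = 0 := by simp [cyclicQuad]

lemma cyclicQuad_add_sub (s : G) (x v : G → ZMod 2) :
    cyclicQuad s (x + v) - cyclicQuad s x
      = x ⬝ᵥ (fun i => v (i + s) + v (i - s)) + cyclicQuad s v := by
  have hshift : ∑ i, v i * x (i + s) = ∑ i, x i * v (i - s) :=
    Fintype.sum_equiv (Equiv.addRight s) _ _ fun i => by simp [mul_comm]
  simp only [cyclicQuad, dotProduct, Pi.add_apply, add_mul, mul_add, Finset.sum_add_distrib,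
    ← hshift]
  ring

lemma linearStructures_cyclicQuad (s : G) :
    linearStructures (cyclicQuad s) = {v | Periodic v (2 • s)} := by
  ext v
  rw [mem_linearStructures_iff_of_sub_eq_dotProduct (cyclicQuad_add_sub s · v)]
  simp only [funext_iff, Pi.zero_apply, CharTwo.add_eq_zero, Set.mem_ofPred_eq, Periodic,
    two_nsmul]
  exact (Equiv.subRight s).forall_congr fun i => by simp [sub_add_add_cancel]

lemma ncard_linearStructures_cyclicQuad (s : G) :
    (linearStructures (cyclicQuad s)).ncard = 2 ^ (AddSubgroup.zmultiples (2 • s)).index := by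
  rw [linearStructures_cyclicQuad, ncard_setOf_periodic, Nat.card_zmod]

lemma one_lt_ncard_linearStructures_cyclicQuad (s : G) :
    1 < (linearStructures (cyclicQuad s)).ncard := by
  rw [ncard_linearStructures_cyclicQuad]
  exact Nat.one_lt_two_pow AddSubgroup.index_ne_zero_of_finite

lemma cyclicQuad_eq_zero_of_even {s : G} (hs : Even (addOrderOf s)) {v : G → ZMod 2}
    (hv : v ∈ linearStructures (cyclicQuad s)) : cyclicQuad s v = 0 := by
  rw [linearStructures_cyclicQuad] at hv
  obtain ⟨m, hm⟩ := hs
  have hper : Periodic (fun i => v i * v (i + s)) s := fun i => by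
    dsimp only
    rw [add_assoc, ← two_nsmul, hv, mul_comm]
  -- `m • s` has order two, so the shift by it pairs off the terms of the sum.
  refine sum_eq_zero_of_periodic_of_add_self_eq_zero (hper.nsmul m) ?_ ?_
  · rw [← add_nsmul, ← hm, addOrderOf_nsmul_eq_zero]
  · have := addOrderOf_pos s
    exact nsmul_ne_zero_of_lt_addOrderOf (by omega) (by omega)

lemma exists_cyclicQuad_eq_one_of_odd {s : G} (hs : Odd (addOrderOf s)) :
    ∃ v ∈ linearStructures (cyclicQuad s), cyclicQuad s v = 1 := by
  classical
  set H := AddSubgroup.zmultiples s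
  let v : G → ZMod 2 := fun i => if i ∈ H then 1 else 0
  have hv : Periodic v s := fun i => by
    simp [v, AddSubgroup.add_mem_cancel_right H (AddSubgroup.mem_zmultiples s)]
  refine ⟨v, by rw [linearStructures_cyclicQuad]; exact hv.nsmul 2, ?_⟩
  calc cyclicQuad s v = ∑ i, v i := Finset.sum_congr rfl fun i _ => by
          rw [hv i]; by_cases hi : i ∈ H <;> simp [v, hi]
    _ = (Nat.card H : ZMod 2) := by simp [v, Finset.sum_boole, Fintype.card_subtype]
    _ = 1 := by rw [Nat.card_zmultiples, ZMod.natCast_eq_one_iff_odd]; exact hs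

lemma periods_eq_linearStructures_cyclicQuad_iff (s : G) :
    periods (cyclicQuad s) = linearStructures (cyclicQuad s) ↔ Even (addOrderOf s) := by
  constructor
  · intro h
    by_contra hodd
    obtain ⟨v, hv, hv1⟩ := exists_cyclicQuad_eq_one_of_odd (Nat.not_even_iff_odd.mp hodd)
    rw [← h, mem_periods_iff_mem_linearStructures, hv1, cyclicQuad_zero] at hv
    exact one_ne_zero hv.2
  · intro hs
    refine (periods_subset_linearStructures _).antisymm fun v hv => ?_
    rw [mem_periods_iff_mem_linearStructures]
    exact ⟨hv, by rw [cyclicQuad_eq_zero_of_even hs hv, cyclicQuad_zero]⟩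

lemma cyclicQuad_map (φ : G ≃+ G) (s : G) (x : G → ZMod 2) :
    cyclicQuad (φ s) x = cyclicQuad s (x ∘ φ) := by
  simp only [cyclicQuad, comp_apply, map_add]
  exact (φ.toEquiv.sum_comp fun i => x i * x (i + φ s)).symm

end CyclicQuad

section ShortQuad

variable {n : ℕ} [NeZero n]

lemma shortQuad_add_sub (hn : Even n) (x v : ZMod n → ZMod 2) :
    shortQuad n (x + v) - shortQuad n x
      = x ⬝ᵥ (fun j => v (j + (n / 2 : ℕ))) + shortQuad n v := by
  obtain ⟨m, hm⟩ := hn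
  have hhalf : ((n / 2 : ℕ) : ZMod n) + (n / 2 : ℕ) = 0 := by
    rw [← Nat.cast_add, show n / 2 + n / 2 = n by omega, ZMod.natCast_self]
  rw [dotProduct, ZMod.sum_eq_sum_range_halves (m := n / 2) (by omega)]
  simp only [shortQuad, Pi.add_apply, add_assoc, hhalf, add_zero]
  rw [← Finset.sum_sub_distrib, ← Finset.sum_add_distrib]
  exact Finset.sum_congr rfl fun i _ => by ring

lemma linearStructures_shortQuad (hn : Even n) : linearStructures (shortQuad n) = {0} := by
  ext v
  rw [mem_linearStructures_iff_of_sub_eq_dotProduct (shortQuad_add_sub hn · v)]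
  refine ⟨fun hv => funext fun j => by simpa using congr_fun hv (j - (n / 2 : ℕ)), ?_⟩
  rintro rfl
  rfl

end ShortQuad

section AffEquiv

variable {n : ℕ} [NeZero n] {f g : BF n}

lemma affEquiv.exists_addMonoidHom (h : affEquiv f g) :
    ∃ (A : (ZMod n → ZMod 2) →+ (ZMod n → ZMod 2)) (b : ZMod n → ZMod 2),
      Bijective A ∧ g = fun x => f (A x + b) := by
  obtain ⟨A, b, hA, hfg⟩ := h
  exact ⟨A.mulVecLin.toAddMonoidHom, b, ⟨Matrix.mulVec_injective_iff_isUnit.mpr hA,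
    Matrix.mulVec_surjective_iff_isUnit.mpr hA⟩, funext hfg⟩

lemma affEquiv.ncard_linearStructures_eq (h : affEquiv f g) :
    (linearStructures g).ncard = (linearStructures f).ncard := by
  obtain ⟨A, b, hA, rfl⟩ := h.exists_addMonoidHom
  rw [linearStructures_comp_affine f hA.2 b]
  exact Set.ncard_preimage_of_injective_subset_range hA.1 (by simp [hA.2.range_eq])

lemma affEquiv.periods_eq_linearStructures_iff (h : affEquiv f g) :
    periods g = linearStructures g ↔ periods f = linearStructures f := by
  obtain ⟨A, b, hA, rfl⟩ := h.exists_addMonoidHom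
  rw [linearStructures_comp_affine f hA.2 b, periods_comp_affine f hA.2 b]
  exact (Set.preimage_injective.mpr hA.2).eq_iff

lemma addOrderOf_eq_of_affEquiv_cyclicQuad {s s' : ZMod n}
    (h : affEquiv (cyclicQuad s) (cyclicQuad s')) : addOrderOf s = addOrderOf s' := by
  refine (addOrderOf_eq_of_addOrderOf_two_nsmul_eq ?_ ?_).symm
  · have hidx := h.ncard_linearStructures_eq
    rw [ncard_linearStructures_cyclicQuad, ncard_linearStructures_cyclicQuad] at hidx
    have h' := (AddSubgroup.zmultiples (2 • s')).index_mul_card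
    have h₀ := (AddSubgroup.zmultiples (2 • s)).index_mul_card
    rw [Nat.card_zmultiples, Nat.pow_right_injective le_rfl hidx] at h'
    rw [Nat.card_zmultiples] at h₀
    exact Nat.eq_of_mul_eq_mul_left (Nat.pos_of_ne_zero AddSubgroup.index_ne_zero_of_finite)
      (h'.trans h₀.symm)
  · rw [← periods_eq_linearStructures_cyclicQuad_iff,
      ← periods_eq_linearStructures_cyclicQuad_iff]
    exact h.periods_eq_linearStructures_iff

lemma not_affEquiv_cyclicQuad_shortQuad (hn : Even n) (s : ZMod n) :
    ¬ affEquiv (cyclicQuad s) (shortQuad n) ∧ ¬ affEquiv (shortQuad n) (cyclicQuad s) := by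
  have hne : (linearStructures (shortQuad n)).ncard ≠
      (linearStructures (cyclicQuad s)).ncard := by
    rw [linearStructures_shortQuad hn, Set.ncard_singleton]
    exact (one_lt_ncard_linearStructures_cyclicQuad s).ne
  exact ⟨fun h => hne h.ncard_linearStructures_eq,
    fun h => hne h.ncard_linearStructures_eq.symm⟩

end AffEquiv

/-- If two quadratic MRS functions in `n` variables are affine equivalent, then there is a
permutation `ξ` of the variables giving the equivalence: `g x = f (x ∘ ξ)`. -/
theorem quadMRS_affEquiv_implies_perm_equiv
    (n : ℕ) [NeZero n] (f g : BF n)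
    (hf : IsQuadMRS n f) (hg : IsQuadMRS n g) (h : affEquiv f g) :
    ∃ ξ : Equiv.Perm (ZMod n), ∀ x, g x = f (fun i => x (ξ i)) := by
  rcases hf with ⟨j, -, -, rfl⟩ | ⟨hn, rfl⟩ <;>
    rcases hg with ⟨j', -, -, rfl⟩ | ⟨hn', rfl⟩
  · rw [quadMRS_eq_cyclicQuad, quadMRS_eq_cyclicQuad] at h ⊢
    obtain ⟨u, hu⟩ :=
      ZMod.exists_unit_mul_eq_of_addOrderOf_eq (addOrderOf_eq_of_affEquiv_cyclicQuad h)
    let φ := DistribMulAction.toAddEquiv (ZMod n) u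
    exact ⟨φ.toEquiv, fun x => by rw [← hu]; exact cyclicQuad_map φ _ x⟩
  · exact ((not_affEquiv_cyclicQuad_shortQuad hn' _).1 h).elim
  · exact ((not_affEquiv_cyclicQuad_shortQuad hn _).2 h).elim
  · exact ⟨1, fun _ => rfl⟩
end

section
/- Let n ≥ 3, and let C_n denote the set of distinct cubic MRS functions in n variables, i.e., the set of Boolean functions of the form (1,j,k) for 1 < j < k ≤ n. If n ≡ 0 (mod 3), then |C_n| = (n² − 3n + 6)/6; otherwise |C_n| = (n² − 3n + 2)/6. -/
/-- The cubic MRS function `(1,j,k)` in `n` variables: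
`x ↦ Σ_{i=1}^n x_i x_{(i+j-1) Mod n} x_{(i+k-1) Mod n}`, the sum taken in `GF(2)`. -/
def cubicMRS (n : ℕ) [NeZero n] (j k : ℕ) : BF n :=
  fun x => ∑ i : ZMod n,
    x i * x (i + ((j - 1 : ℕ) : ZMod n)) * x (i + ((k - 1 : ℕ) : ZMod n))

/-- `C_n`: the set of all cubic MRS functions `(1,j,k)`, `1 < j < k ≤ n`, in `n` variables. -/
def cubicSet (n : ℕ) [NeZero n] : Set (BF n) :=
  {f | ∃ j k : ℕ, 1 < j ∧ j < k ∧ k ≤ n ∧ f = cubicMRS n j k}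

/-!
Write `(1,j,k)` as the MRS function generated by the monomial with support
`S = {0, j-1, k-1} ⊆ ℤ/n`. Two such functions coincide iff their supports are translates:
evaluated at the indicator of `S'`, the function of `S` counts (mod 2) the translates of `S`
equal to `S'`, and for `S = S'` this count is the order of the stabilizer of `S'`, an odd divisor
of `|S'| = 3`. The supports containing `0` in the translation class of `{0, a, b}` are those of
`(a, b)`, `ρ (a, b) = (b - a, n - a)` and `ρ² (a, b)`, and `ρ` has a fixed point, `(n/3, 2n/3)`,
exactly when `3 ∣ n`. Hence `3 |C_n| = C(n-1, 2) + 2·[3 ∣ n]`.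
-/

open Finset Pointwise

section MRS

variable {G : Type*} [AddCommGroup G] [DecidableEq G] [Fintype G]

theorem card_filter_vadd_eq_self_dvd_card (S : Finset G) : #{t : G | t +ᵥ S = S} ∣ #S := by
  set H : AddSubgroup G := AddAction.stabilizer G S
  have hH : ∀ t, t ∈ H ↔ t +ᵥ S = S := fun t => AddAction.mem_stabilizer_iff
  let q : G → G ⧸ H := QuotientAddGroup.mk
  -- each fiber of `q` over a point of `S` is a whole coset of `H`, which lies in `S`
  have hfiber : ∀ s ∈ S, #{s' ∈ S | q s' = q s} = #{t : G | t +ᵥ S = S} := by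
    intro s hs
    refine card_bij' (fun s' _ => -s + s') (fun t _ => s + t) ?_ ?_ ?_ ?_
    · intro s' hs'
      simpa [hH] using QuotientAddGroup.eq.1 (mem_filter.1 hs').2.symm
    · intro t ht
      simp only [mem_filter, mem_univ, true_and] at ht ⊢
      refine ⟨?_, ?_⟩
      · rw [← ht, add_comm]
        exact vadd_mem_vadd_finset hs
      · simpa [q, QuotientAddGroup.eq, hH] using ht
    · intros; abel
    · intros; abel
  rw [card_eq_sum_card_image q S, sum_congr rfl (g := fun _ => #{t : G | t +ᵥ S = S})]
  · simp
  · simp only [mem_image]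
    rintro _ ⟨s, hs, rfl⟩
    exact hfiber s hs

/-- The MRS function generated by the monomial `∏_{s ∈ S} x_s`. -/
def mrs (S : Finset G) (x : G → ZMod 2) : ZMod 2 := ∑ i, ∏ s ∈ S, x (i + s)

theorem mrs_vadd (t : G) (S : Finset G) : mrs (t +ᵥ S) = mrs S := by
  funext x
  refine Fintype.sum_equiv (Equiv.addRight t) _ _ fun i => ?_
  rw [vadd_finset_def, prod_image (AddAction.injective t).injOn]
  simp [add_assoc]

theorem mrs_indicator {S S' : Finset G} (h : #S = #S') :
    mrs S (fun v => if v ∈ S' then 1 else 0) = #{t : G | t +ᵥ S = S'} := by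
  have hsub : ∀ t : G, (∀ s ∈ S, t + s ∈ S') ↔ t +ᵥ S = S' := fun t => by
    rw [← subset_iff_eq_of_card_le (by rw [card_vadd_finset, h]), vadd_finset_def,
      image_subset_iff]
    rfl
  simp only [mrs, prod_boole, hsub, sum_boole]

theorem mrs_eq_mrs_iff {S S' : Finset G} (h : #S = #S') (hodd : Odd #S) :
    mrs S = mrs S' ↔ ∃ t : G, t +ᵥ S = S' := by
  refine ⟨fun hS => ?_, fun ⟨t, ht⟩ => ht ▸ (mrs_vadd t S).symm⟩
  have hself : Odd #{t : G | t +ᵥ S' = S'} :=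
    (h ▸ hodd).of_dvd_nat (card_filter_vadd_eq_self_dvd_card S')
  have hone := congrFun hS fun v => if v ∈ S' then 1 else 0
  rw [mrs_indicator h, mrs_indicator rfl, (ZMod.natCast_eq_one_iff_odd).2 hself] at hone
  obtain ⟨t, ht⟩ : ({t : G | t +ᵥ S = S'} : Finset G).Nonempty :=
    card_ne_zero.1 fun h0 => by simp [h0] at hone
  exact ⟨t, (mem_filter.1 ht).2⟩

end MRS

theorem three_mul_card_image_of_fiber_eq_orbit {α β : Type*} [DecidableEq α] [DecidableEq β]
    {P : Finset α} {f : α → β} {ρ : α → α} (hmaps : ∀ p ∈ P, ρ p ∈ P)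
    (hρ : ∀ p ∈ P, ρ (ρ (ρ p)) = p)
    (hfiber : ∀ p ∈ P, ∀ q ∈ P, f p = f q ↔ q = p ∨ q = ρ p ∨ q = ρ (ρ p)) :
    3 * #(P.image f) = #P + 2 * #{p ∈ P | ρ p = p} := by
  have horbit : ∀ p ∈ P, {q ∈ P | f q = f p} = {p, ρ p, ρ (ρ p)} := fun p hp => by
    ext q
    simp only [mem_filter, mem_insert, mem_singleton]
    constructor
    · exact fun ⟨hq, hfq⟩ => (hfiber p hp q hq).1 hfq.symm
    · intro hq
      have hqP : q ∈ P := by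
        rcases hq with rfl | rfl | rfl
        exacts [hp, hmaps p hp, hmaps _ (hmaps p hp)]
      exact ⟨hqP, ((hfiber p hp q hqP).2 hq).symm⟩
  have hfixed :
      ∀ p ∈ P, ∀ q ∈ ({p, ρ p, ρ (ρ p)} : Finset α), ρ q = q → ρ p = p := by
    intro p hp q hq hfix
    have h3 := hρ p hp
    simp only [mem_insert, mem_singleton] at hq
    rcases hq with rfl | rfl | rfl
    · exact hfix
    · rw [hfix, hfix] at h3
      exact h3 ▸ hfix
    · rw [hfix] at h3
      rw [← h3, hfix, h3]
  have hcount : ∀ p ∈ P,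
      #{q ∈ P | f q = f p} + 2 * #{q ∈ {q ∈ P | ρ q = q} | f q = f p} = 3 := by
    intro p hp
    rw [filter_filter]
    simp_rw [and_comm (a := ρ _ = _), ← filter_filter, horbit p hp]
    by_cases hpfix : ρ p = p
    · simp [hpfix, filter_singleton]
    · have h1 : ρ p ≠ ρ (ρ p) := fun h => hpfix (hfixed p hp (ρ p) (by simp) h.symm)
      have h2 : p ≠ ρ (ρ p) := fun h => hpfix (by simpa [← h] using hρ p hp)
      rw [filter_false_of_mem fun q hq hq' => hpfix (hfixed p hp q hq hq'),
        card_insert_of_notMem (by simp [Ne.symm hpfix, h2]), card_pair h1]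
      rfl
  rw [card_eq_sum_card_image f P,
    card_eq_sum_card_fiberwise (f := f) (t := P.image f) fun p hp =>
      mem_image_of_mem f (mem_filter.1 hp).1,
    mul_sum, ← sum_add_distrib, sum_congr rfl (g := fun _ => 3), sum_const, smul_eq_mul, mul_comm]
  simp only [mem_image]
  rintro _ ⟨p, hp, rfl⟩
  exact hcount p hp

theorem natCast_eq_natCast_iff_of_lt {n a b : ℕ} (ha : a < n) (hb : b < n) :
    (a : ZMod n) = b ↔ a = b := by
  rw [ZMod.natCast_eq_natCast_iff', Nat.mod_eq_of_lt ha, Nat.mod_eq_of_lt hb]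

section Cubic

variable (n : ℕ)

/-- `(a, b)` stands for the cubic MRS function `(1, a+1, b+1)`. -/
def cubicPairs : Finset (ℕ × ℕ) := {p ∈ Ioo 0 n ×ˢ Ioo 0 n | p.1 < p.2}

def cubicSupport (p : ℕ × ℕ) : Finset (ZMod n) := {0, (p.1 : ZMod n), (p.2 : ZMod n)}

def cubicRotate (p : ℕ × ℕ) : ℕ × ℕ := (p.2 - p.1, n - p.1)

variable {n}

theorem mem_cubicPairs {p : ℕ × ℕ} :
    p ∈ cubicPairs n ↔ 0 < p.1 ∧ p.1 < p.2 ∧ p.2 < n := by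
  simp only [cubicPairs, mem_filter, mem_product, mem_Ioo]
  omega

theorem card_cubicPairs : #(cubicPairs n) = (n - 1).choose 2 := by
  rw [cubicPairs, card_product_filter_lt, Nat.card_Ioo, Nat.sub_zero]

theorem cubicRotate_mem_cubicPairs {p : ℕ × ℕ} (hp : p ∈ cubicPairs n) :
    cubicRotate n p ∈ cubicPairs n := by
  rw [mem_cubicPairs] at hp ⊢
  simp only [cubicRotate]
  omega

theorem cubicRotate_cubicRotate_cubicRotate {p : ℕ × ℕ} (hp : p ∈ cubicPairs n) :
    cubicRotate n (cubicRotate n (cubicRotate n p)) = p := by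
  rw [mem_cubicPairs] at hp
  simp only [cubicRotate, Prod.ext_iff]
  omega

theorem card_filter_cubicRotate_eq_self [NeZero n] :
    #{p ∈ cubicPairs n | cubicRotate n p = p} = if 3 ∣ n then 1 else 0 := by
  have := NeZero.pos n
  split_ifs with h3
  · rw [card_eq_one]
    refine ⟨(n / 3, 2 * (n / 3)), ?_⟩
    ext p
    simp only [mem_filter, mem_cubicPairs, cubicRotate, Prod.ext_iff, mem_singleton]
    constructor <;> intro h <;> omega
  · rw [card_eq_zero, filter_eq_empty_iff]
    intro p hp
    simp only [mem_cubicPairs] at hp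
    simp only [cubicRotate, Prod.ext_iff]
    omega

theorem cast_ne_of_mem_cubicPairs {p : ℕ × ℕ} (hp : p ∈ cubicPairs n) :
    (p.1 : ZMod n) ≠ 0 ∧ (p.2 : ZMod n) ≠ 0 ∧ (p.1 : ZMod n) ≠ p.2 := by
  rw [mem_cubicPairs] at hp
  simp only [Ne, ← Nat.cast_zero (R := ZMod n)]
  rw [natCast_eq_natCast_iff_of_lt (by omega) (by omega), natCast_eq_natCast_iff_of_lt (by omega)
    (by omega), natCast_eq_natCast_iff_of_lt (by omega) (by omega)]
  omega

theorem card_cubicSupport {p : ℕ × ℕ} (hp : p ∈ cubicPairs n) : #(cubicSupport n p) = 3 := by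
  obtain ⟨ha, hb, hab⟩ := cast_ne_of_mem_cubicPairs hp
  rw [cubicSupport, card_insert_of_notMem (by simp [ha.symm, hb.symm]), card_pair hab]

theorem natCast_mem_cubicSupport {p : ℕ × ℕ} (hp : p ∈ cubicPairs n) {v : ℕ} (hv : v < n) :
    (v : ZMod n) ∈ cubicSupport n p ↔ v = 0 ∨ v = p.1 ∨ v = p.2 := by
  rw [mem_cubicPairs] at hp
  rw [cubicSupport, mem_insert, mem_insert, mem_singleton, ← Nat.cast_zero,
    natCast_eq_natCast_iff_of_lt hv (by omega), natCast_eq_natCast_iff_of_lt hv (by omega),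
    natCast_eq_natCast_iff_of_lt hv hp.2.2]

theorem cubicSupport_injOn : Set.InjOn (cubicSupport n) (cubicPairs n) := by
  intro p hp q hq h
  have hp' := mem_cubicPairs.1 hp
  have hq' := mem_cubicPairs.1 hq
  have hself : ∀ r : ℕ × ℕ,
      (r.1 : ZMod n) ∈ cubicSupport n r ∧ (r.2 : ZMod n) ∈ cubicSupport n r := fun r => by
    simp [cubicSupport]
  have h1 := (natCast_mem_cubicSupport hq (v := p.1) (by omega)).1 (h ▸ (hself p).1)
  have h2 := (natCast_mem_cubicSupport hq (v := p.2) (by omega)).1 (h ▸ (hself p).2)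
  have h3 := (natCast_mem_cubicSupport hp (v := q.1) (by omega)).1 (h ▸ (hself q).1)
  have h4 := (natCast_mem_cubicSupport hp (v := q.2) (by omega)).1 (h ▸ (hself q).2)
  ext <;> omega

theorem neg_fst_vadd_cubicSupport {p : ℕ × ℕ} (hp : p ∈ cubicPairs n) :
    -(p.1 : ZMod n) +ᵥ cubicSupport n p = cubicSupport n (cubicRotate n p) := by
  rw [mem_cubicPairs] at hp
  have hsub : ((p.2 - p.1 : ℕ) : ZMod n) = -p.1 + p.2 := by
    rw [Nat.cast_sub hp.2.1.le]; ring
  have hneg : ((n - p.1 : ℕ) : ZMod n) = -p.1 := by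
    rw [Nat.cast_sub (by omega), ZMod.natCast_self, zero_sub]
  simp only [cubicSupport, cubicRotate, vadd_finset_insert, vadd_finset_singleton, vadd_eq_add,
    add_zero, neg_add_cancel, hsub, hneg]
  rw [insert_comm, pair_comm]

theorem neg_snd_vadd_cubicSupport {p : ℕ × ℕ} (hp : p ∈ cubicPairs n) :
    -(p.2 : ZMod n) +ᵥ cubicSupport n p =
      cubicSupport n (cubicRotate n (cubicRotate n p)) := by
  have hsplit : -(p.2 : ZMod n) = -((cubicRotate n p).1 : ZMod n) + -(p.1 : ZMod n) := by
    rw [cubicRotate, Nat.cast_sub (mem_cubicPairs.1 hp).2.1.le]; ring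
  rw [hsplit, ← vadd_vadd, neg_fst_vadd_cubicSupport hp,
    neg_fst_vadd_cubicSupport (cubicRotate_mem_cubicPairs hp)]

theorem exists_vadd_cubicSupport_iff {p q : ℕ × ℕ} (hp : p ∈ cubicPairs n)
    (hq : q ∈ cubicPairs n) :
    (∃ t : ZMod n, t +ᵥ cubicSupport n p = cubicSupport n q) ↔
      q = p ∨ q = cubicRotate n p ∨ q = cubicRotate n (cubicRotate n p) := by
  have hρp := cubicRotate_mem_cubicPairs hp
  have hρρp := cubicRotate_mem_cubicPairs hρp
  constructor
  · rintro ⟨t, ht⟩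
    have h0 : (0 : ZMod n) ∈ t +ᵥ cubicSupport n p := by
      rw [ht]
      simp [cubicSupport]
    obtain ⟨s, hs, hts⟩ := mem_vadd_finset.1 h0
    rw [← neg_eq_of_add_eq_zero_left hts] at ht
    simp only [cubicSupport, mem_insert, mem_singleton] at hs
    rcases hs with rfl | rfl | rfl
    · rw [neg_zero, zero_vadd] at ht
      exact Or.inl (cubicSupport_injOn hq hp ht.symm)
    · rw [neg_fst_vadd_cubicSupport hp] at ht
      exact Or.inr (Or.inl (cubicSupport_injOn hq hρp ht.symm))
    · rw [neg_snd_vadd_cubicSupport hp] at ht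
      exact Or.inr (Or.inr (cubicSupport_injOn hq hρρp ht.symm))
  · rintro (rfl | rfl | rfl)
    exacts [⟨0, zero_vadd _ _⟩, ⟨_, neg_fst_vadd_cubicSupport hp⟩,
      ⟨_, neg_snd_vadd_cubicSupport hp⟩]

variable [NeZero n]

theorem cubicMRS_eq_mrs {p : ℕ × ℕ} (hp : p ∈ cubicPairs n) :
    cubicMRS n (p.1 + 1) (p.2 + 1) = mrs (cubicSupport n p) := by
  obtain ⟨ha, hb, hab⟩ := cast_ne_of_mem_cubicPairs hp
  funext x
  refine sum_congr rfl fun i _ => ?_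
  rw [cubicSupport, prod_insert (by simp [ha.symm, hb.symm]), prod_pair hab, add_zero, mul_assoc]
  rfl

theorem cubicSet_eq_image :
    cubicSet n = (fun p => mrs (cubicSupport n p)) '' (cubicPairs n : Set (ℕ × ℕ)) := by
  ext f
  simp only [cubicSet, Set.mem_ofPred_eq, Set.mem_image, mem_coe]
  constructor
  · rintro ⟨j, k, hj, hjk, hk, rfl⟩
    have hp : (j - 1, k - 1) ∈ cubicPairs n := mem_cubicPairs.2 (by simp only; omega)
    refine ⟨_, hp, ?_⟩
    rw [← cubicMRS_eq_mrs hp, Nat.sub_add_cancel (by omega), Nat.sub_add_cancel (by omega)]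
  · rintro ⟨p, hp, rfl⟩
    have hp' := mem_cubicPairs.1 hp
    exact ⟨p.1 + 1, p.2 + 1, by omega, by omega, by omega, (cubicMRS_eq_mrs hp).symm⟩

end Cubic

theorem card_cubicSet_general (n : ℕ) [NeZero n] :
    (3 ∣ n → (cubicSet n).ncard = (n ^ 2 - 3 * n + 6) / 6) ∧
    (¬ 3 ∣ n → (cubicSet n).ncard = (n ^ 2 - 3 * n + 2) / 6) := by
  classical
  have hcount := three_mul_card_image_of_fiber_eq_orbit (f := fun p => mrs (cubicSupport n p))
    (fun _ => cubicRotate_mem_cubicPairs) (fun _ => cubicRotate_cubicRotate_cubicRotate)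
    fun p hp q hq => by
      rw [mrs_eq_mrs_iff (by rw [card_cubicSupport hp, card_cubicSupport hq])
        (by rw [card_cubicSupport hp]; decide), exists_vadd_cubicSupport_iff hp hq]
  rw [card_cubicPairs, Nat.choose_two_right, card_filter_cubicRotate_eq_self] at hcount
  have hpair : (n - 1) * (n - 1 - 1) + 3 * n = n ^ 2 + 2 := by
    obtain ⟨m, rfl⟩ := Nat.exists_eq_add_one.2 (NeZero.pos n)
    cases m with
    | zero => rfl
    | succ m => simp only [Nat.add_sub_cancel]; ring
  rw [cubicSet_eq_image, ← coe_image, Set.ncard_coe_finset]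
  have := NeZero.pos n
  constructor <;> intro h3 <;> simp only [h3, if_true, if_false] at hcount <;> omega

/-- The number of distinct cubic MRS functions in `n ≥ 3` variables is
`(n² - 3n + 6)/6` if `3 ∣ n`, and `(n² - 3n + 2)/6` otherwise. -/
theorem card_cubicSet (n : ℕ) [NeZero n] (hn : 3 ≤ n) :
    (3 ∣ n → (cubicSet n).ncard = (n ^ 2 - 3 * n + 6) / 6) ∧
    (¬ 3 ∣ n → (cubicSet n).ncard = (n ^ 2 - 3 * n + 2) / 6) :=
  card_cubicSet_general n
end

section
/- Let n > 4, let (1,j,k) and (1,p,q) be cubic MRS functions in n variables (1 < j, k ≤ n with j ≠ k, and 1 < p, q ≤ n with p ≠ q), and suppose μ·(1,j,k) = (1,p,q) for some permutation μ of {1,...,n} which preserves rotation symmetry. Then there exists a permutation σ of {1,...,n} such that: σ·(1,j,k) = (1,p,q); σ(1) = 1; σ(i) = ((i−1)(σ(2)−1) + 1) Mod n for all 1 ≤ i ≤ n; gcd(σ(2)−1, n) = 1; and the pattern of the term [1, σ(j), σ(k)] equals (σ(2)−1)·(j−1; k−1; k−j) computed Mod n, i.e., σ(j)−1 ≡ (σ(2)−1)(j−1),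 σ(k)−1 ≡ (σ(2)−1)(k−1), and σ(k)−σ(j) ≡ (σ(2)−1)(k−j), all modulo n. -/
/-- The set of cubic MRS functions `(1,j,k)` with `1 < j, k ≤ n`, `j ≠ k`. -/
def cubicSetNe (n : ℕ) [NeZero n] : Set (BF n) :=
  {f | ∃ j k : ℕ, 1 < j ∧ j ≤ n ∧ 1 < k ∧ k ≤ n ∧ j ≠ k ∧ f = cubicMRS n j k}

/-- The action of a permutation `μ` of the variables on a Boolean function:
`(μ·f)(x₁,…,xₙ) = f(x_{μ(1)},…,x_{μ(n)})`. -/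
def permAct {n : ℕ} (μ : Equiv.Perm (ZMod n)) (f : BF n) : BF n :=
  fun x => f (fun i => x (μ i))

/-- A Boolean function is rotation symmetric if it is invariant under the cyclic
shift of the variables. -/
def rotSym {n : ℕ} (f : BF n) : Prop :=
  ∀ x : ZMod n → ZMod 2, f (fun i => x (i + 1)) = f x

/-- A permutation `μ` preserves rotation symmetry (for cubic MRS functions in `n`
variables) if `μ·f` is rotation symmetric for every cubic MRS function `f`. -/
def preservesRS (n : ℕ) [NeZero n] (μ : Equiv.Perm (ZMod n)) : Prop :=
  ∀ f ∈ cubicSetNe n, rotSym (permAct μ f)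

/-!
Take `f = (1,2,3) = Σ xᵢ xᵢ₊₁ xᵢ₊₂`. Since `μ·f` is rotation symmetric, `ν = μ⁻¹ ∘ (· + 1) ∘ μ`
is an automorphism of `f`. Evaluating `f` at indicator vectors of 3-sets shows that `ν` maps
consecutive triples `{r, r+1, r+2}` to consecutive triples. For `n > 4`, two such triples sharing
two points are neighbours, so `ν` acts on triples as `r ↦ r + c` or `r ↦ c - r`, and hence is a
rotation or a reflection of `ZMod n`. A reflection is an involution, whereas
`ν² = μ⁻¹ ∘ (· + 2) ∘ μ` has no fixed point. So `μ (i + c) = μ i + 1`, which forces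
`μ i = t * i + μ 0` with `t` a unit. As `(1,j,k)` is rotation symmetric, the translation by `μ 0`
can be dropped: `σ i = t * i` acts on `(1,j,k)` as `μ` does.
-/

open Finset Equiv

variable {n : ℕ}

theorem ZMod.induction_add_one [NeZero n] {P : ZMod n → Prop} (zero : P 0)
    (add_one : ∀ m, P m → P (m + 1)) (m : ZMod n) : P m := by
  obtain ⟨k, rfl⟩ := ZMod.natCast_zmod_surjective m
  induction k with
  | zero => simpa using zero
  | succ k ih => simpa using add_one _ ih

theorem ZMod.natCast_inj_of_lt {a b : ℕ} (ha : a < n) (hb : b < n) :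
    (a : ZMod n) = b ↔ a = b := by
  rw [ZMod.natCast_eq_natCast_iff', Nat.mod_eq_of_lt ha, Nat.mod_eq_of_lt hb]

theorem ZMod.natCast_ne_zero_of_lt {a : ℕ} (h0 : a ≠ 0) (ha : a < n) : (a : ZMod n) ≠ 0 :=
  ZMod.val_pos.1 (by rw [ZMod.val_cast_of_lt ha]; omega)

theorem ZMod.add_natCast_inj_of_lt {r : ZMod n} {a b : ℕ} (ha : a < n) (hb : b < n) :
    r + a = r + b ↔ a = b := by
  rw [add_right_inj, ZMod.natCast_inj_of_lt ha hb]

def consecTriple (r : ZMod n) : Finset (ZMod n) := {r, r + 1, r + 2}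

@[simp]
theorem mem_consecTriple {r x : ZMod n} :
    x ∈ consecTriple r ↔ x = r ∨ x = r + 1 ∨ x = r + 2 := by
  simp [consecTriple]

theorem mem_consecTriple_iff_exists_lt {r x : ZMod n} :
    x ∈ consecTriple r ↔ ∃ k : ℕ, k < 3 ∧ x = r + k := by
  refine ⟨fun h => ?_, fun ⟨k, hk, hx⟩ => ?_⟩
  · rcases mem_consecTriple.1 h with rfl | rfl | rfl
    exacts [⟨0, by simp⟩, ⟨1, by simp⟩, ⟨2, by simp⟩]
  · interval_cases k <;> simp [hx]

theorem card_consecTriple (hn : 2 < n) (r : ZMod n) : #(consecTriple r) = 3 := by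
  have hinj : Set.InjOn (fun k : ℕ => r + k) (range 3) := fun a ha b hb h =>
    (ZMod.add_natCast_inj_of_lt (by simp at ha; omega) (by simp at hb; omega)).1 h
  have himage : (range 3).image (fun k : ℕ => r + k) = consecTriple r := by
    ext x
    simp only [mem_image, mem_range, mem_consecTriple_iff_exists_lt]
    exact exists_congr fun k => and_congr_right fun _ => eq_comm
  rw [← himage, card_image_of_injOn hinj, card_range]

theorem consecTriple_subset_consecTriple_iff (hn : 4 < n) {i m : ZMod n} :
    consecTriple i ⊆ consecTriple m ↔ i = m := by
  refine ⟨fun h => ?_, fun h => h ▸ subset_refl _⟩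
  obtain ⟨a, ha, hia⟩ := mem_consecTriple_iff_exists_lt.1 (h (by simp : i ∈ consecTriple i))
  obtain ⟨c, hc, hic⟩ := mem_consecTriple_iff_exists_lt.1 (h (by simp : i + 2 ∈ consecTriple i))
  have hac : a + 2 = c := (ZMod.add_natCast_inj_of_lt (r := m) (by omega) (by omega)).1 <| by
    push_cast
    rw [← hic, hia, add_assoc]
  obtain rfl : a = 0 := by omega
  simpa using hia

theorem consecTriple_injective (hn : 4 < n) : Function.Injective (consecTriple (n := n)) :=
  fun _ _ h => (consecTriple_subset_consecTriple_iff hn).1 h.le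

theorem consecTriple_inter_consecTriple_add_two (hn : 4 < n) (r : ZMod n) :
    consecTriple r ∩ consecTriple (r + 2) = {r + 2} := by
  ext x
  refine ⟨fun h => ?_, fun h => by simp [mem_singleton.1 h]⟩
  obtain ⟨a, ha, hxa⟩ := mem_consecTriple_iff_exists_lt.1 (mem_inter.1 h).1
  obtain ⟨b, hb, hxb⟩ := mem_consecTriple_iff_exists_lt.1 (mem_inter.1 h).2
  have hab : a = 2 + b := (ZMod.add_natCast_inj_of_lt (r := r) (by omega) (by omega)).1 <| by
    push_cast
    rw [← hxa, hxb, add_assoc]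
  obtain rfl : b = 0 := by omega
  simpa using hxb

theorem eq_or_eq_add_one_or_eq_sub_one_of_mem_consecTriple (hn : 4 < n) {a b r r' : ZMod n}
    (hab : a ≠ b) (ha : a ∈ consecTriple r) (hb : b ∈ consecTriple r)
    (ha' : a ∈ consecTriple r') (hb' : b ∈ consecTriple r') : r' = r ∨ r' = r + 1 ∨ r' = r - 1 := by
  obtain ⟨s, hs, rfl⟩ := mem_consecTriple_iff_exists_lt.1 ha
  obtain ⟨t, ht, rfl⟩ := mem_consecTriple_iff_exists_lt.1 hb
  obtain ⟨s', hs', hss'⟩ := mem_consecTriple_iff_exists_lt.1 ha'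
  obtain ⟨t', ht', htt'⟩ := mem_consecTriple_iff_exists_lt.1 hb'
  have hst : s ≠ t := fun h => hab (h ▸ rfl)
  -- `r' - r = s - s' = t - t'`
  have hsum : s + t' = t + s' :=
    (ZMod.add_natCast_inj_of_lt (r := r) (by omega) (by omega)).1 <| by
    push_cast
    linear_combination hss' - htt'
  rcases (by omega : s = s' ∨ s = s' + 1 ∨ s' = s + 1) with h | h | h
  · left; subst h; simpa using hss'.symm
  · right; left; rw [h] at hss'; push_cast at hss'; linear_combination -hss'
  · right; right; rw [h] at hss'; push_cast at hss'; linear_combination -hss'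

section Automorphisms

variable [NeZero n]

theorem cubicMRS_two_three_indicator (S : Finset (ZMod n)) :
    cubicMRS n 2 3 (fun z => if z ∈ S then 1 else 0) =
      (#{i | consecTriple i ⊆ S} : ZMod 2) := by
  rw [natCast_card_filter]
  refine sum_congr rfl fun i _ => ?_
  simp only [consecTriple, insert_subset_iff, singleton_subset_iff]
  split_ifs <;> simp_all

theorem exists_map_consecTriple_eq (hn : 4 < n) {ν : Perm (ZMod n)}
    (hν : permAct ν (cubicMRS n 2 3) = cubicMRS n 2 3) (m : ZMod n) :
    ∃ r, (consecTriple m).map ν.toEmbedding = consecTriple r := by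
  set S := (consecTriple m).map ν.toEmbedding
  have hcount : (#{i | consecTriple i ⊆ S} : ZMod 2) = 1 := by
    have hfilter : ({i | consecTriple i ⊆ consecTriple m} : Finset (ZMod n)) = {m} := by
      ext i
      simp only [mem_filter, mem_univ, true_and, mem_singleton,
        consecTriple_subset_consecTriple_iff hn]
    rw [← cubicMRS_two_three_indicator, ← hν]
    simp only [permAct, S, mem_map_equiv, symm_apply_apply]
    rw [cubicMRS_two_three_indicator, hfilter, card_singleton, Nat.cast_one]
  obtain ⟨r, hr⟩ : ({i | consecTriple i ⊆ S} : Finset (ZMod n)).Nonempty := by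
    rw [nonempty_iff_ne_empty]
    rintro h
    simp [h] at hcount
  refine ⟨r, (eq_of_subset_of_card_le (mem_filter.1 hr).2 ?_).symm⟩
  rw [card_map, card_consecTriple (by omega), card_consecTriple (by omega)]

theorem eq_add_or_eq_sub_of_permAct_cubicMRS_two_three (hn : 4 < n)
    {ν : Perm (ZMod n)} (hν : permAct ν (cubicMRS n 2 3) = cubicMRS n 2 3) :
    (∃ c, ∀ i, ν i = i + c) ∨ ∃ c, ∀ i, ν i = c - i := by
  choose g hg using exists_map_consecTriple_eq hn hν
  have hmem {x m : ZMod n} (hx : x ∈ consecTriple m) : ν x ∈ consecTriple (g m) := by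
    rw [← hg, mem_map_equiv, symm_apply_apply]
    exact hx
  have hg_inj : Function.Injective g := fun a b h =>
    consecTriple_injective hn (map_injective ν.toEmbedding (by rw [hg, hg, h]))
  have h1 : (1 : ZMod n) ≠ 0 := by
    exact_mod_cast ZMod.natCast_ne_zero_of_lt (a := 1) one_ne_zero (by omega)
  have h2 : (2 : ZMod n) ≠ 0 := by
    exact_mod_cast ZMod.natCast_ne_zero_of_lt (a := 2) two_ne_zero (by omega)
  have hstep (m : ZMod n) : g (m + 1) - g m = 1 ∨ g (m + 1) - g m = -1 := by
    have hne : ν (m + 1) ≠ ν (m + 2) := ν.injective.ne fun h => h1 (by linear_combination -h)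
    have hm2 : m + 2 ∈ consecTriple (m + 1) := by
      simp only [mem_consecTriple]; right; left; ring
    rcases eq_or_eq_add_one_or_eq_sub_one_of_mem_consecTriple hn hne (hmem (m := m) (by simp))
      (hmem (m := m) (by simp)) (hmem (m := m + 1) (by simp)) (hmem hm2) with h | h | h
    · exact absurd (hg_inj h) fun h' => h1 (by linear_combination h')
    · left; rw [h]; ring
    · right; rw [h]; ring
  have hconst : ∀ m, g (m + 1) - g m = g 1 - g 0 :=
    ZMod.induction_add_one (by simp) fun m ih => by
    have hback : g (m + 1 + 1) ≠ g m := hg_inj.ne fun h => h2 (by linear_combination h)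
    rcases hstep m with h | h <;> rcases hstep (m + 1) with h' | h' <;>
      first
      | exact absurd (by linear_combination h + h') hback
      | linear_combination h' - h + ih
  have hlin : ∀ m, g m = g 0 + (g 1 - g 0) * m :=
    ZMod.induction_add_one (by simp) fun m ih => by linear_combination hconst m + ih
  have hν_mem (m : ZMod n) : ν m ∈ consecTriple (g (m - 2)) ∩ consecTriple (g m) :=
    mem_inter.2 ⟨hmem (by simp only [mem_consecTriple]; right; right; ring), hmem (by simp)⟩
  rcases hstep 0 with h | h <;> rw [zero_add] at h
  · refine .inl ⟨g 0, fun m => ?_⟩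
    have hm : g m = g (m - 2) + 2 := by rw [hlin m, hlin (m - 2), h]; ring
    have := hν_mem m
    rw [hm, consecTriple_inter_consecTriple_add_two hn, mem_singleton, ← hm, hlin m, h] at this
    linear_combination this
  · refine .inr ⟨g 0 + 2, fun m => ?_⟩
    have hm : g (m - 2) = g m + 2 := by rw [hlin m, hlin (m - 2), h]; ring
    have := hν_mem m
    rw [hm, inter_comm, consecTriple_inter_consecTriple_add_two hn, mem_singleton, hlin m,
      h] at this
    linear_combination this

end Automorphisms

theorem permAct_inv_mul_addRight_one_mul_eq_self {μ : Perm (ZMod n)} {f : BF n}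
    (h : rotSym (permAct μ f)) : permAct (μ⁻¹ * Equiv.addRight 1 * μ) f = f := by
  funext x
  simpa [permAct] using h (fun z => x (μ⁻¹ z))

section RotationSymmetry

variable [NeZero n]

theorem rotSym_cubicMRS (j k : ℕ) : rotSym (cubicMRS n j k) := fun x =>
  Fintype.sum_equiv (Equiv.addRight 1) _ _ fun i => by simp only [coe_addRight]; ring_nf

theorem rotSym.apply_add_right {f : BF n} (hf : rotSym f) (a : ZMod n) (x : ZMod n → ZMod 2) :
    f (fun i => x (i + a)) = f x := by
  induction a using ZMod.induction_add_one generalizing x with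
  | zero => simp
  | add_one a ih =>
    calc f (fun i => x (i + (a + 1))) = f (fun i => x (i + 1 + a)) := by
          simp only [add_right_comm, add_assoc]
      _ = f x := (hf fun i => x (i + a)).trans (ih x)

theorem permAct_eq_permAct_mulLeft {f : BF n} (hf : rotSym f) {μ : Perm (ZMod n)}
    {u : (ZMod n)ˣ} {b : ZMod n} (hμ : ∀ i, μ i = u * i + b) :
    permAct μ f = permAct (Units.mulLeft u) f := by
  funext x
  have hμ' : ∀ i, μ i = u * (i + ↑u⁻¹ * b) := fun i => by
    rw [hμ, mul_add, Units.mul_inv_cancel_left]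
  simpa [permAct, hμ'] using hf.apply_add_right (↑u⁻¹ * b) fun i => x (u * i)

theorem exists_unit_apply_eq_mul_add {μ : Perm (ZMod n)} {c : ZMod n}
    (h : ∀ i, μ (i + c) = μ i + 1) : ∃ u : (ZMod n)ˣ, ∀ i, μ i = u * i + μ 0 := by
  have hmul : ∀ k, μ (c * k) = μ 0 + k := ZMod.induction_add_one (by simp) fun k ih => by
    rw [mul_add_one, h, ih, add_assoc]
  have hinv : c * (μ 1 - μ 0) = 1 := μ.injective (by rw [hmul]; ring)
  refine ⟨⟨μ 1 - μ 0, c, by rw [mul_comm, hinv], hinv⟩, fun i => ?_⟩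
  calc μ i = μ (c * ((μ 1 - μ 0) * i)) := by rw [← mul_assoc, hinv, one_mul]
    _ = (μ 1 - μ 0) * i + μ 0 := by rw [hmul, add_comm]

end RotationSymmetry

theorem exists_sigma_of_permEquiv_general (n j k p q : ℕ) [NeZero n] (hn : 4 < n)
    (μ : Equiv.Perm (ZMod n)) (hμ : preservesRS n μ)
    (hact : permAct μ (cubicMRS n j k) = cubicMRS n p q) :
    ∃ σ : Equiv.Perm (ZMod n),
      permAct σ (cubicMRS n j k) = cubicMRS n p q ∧
      σ 0 = 0 ∧
      (∀ i : ZMod n, σ i = σ 1 * i) ∧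
      Nat.gcd ((σ 1).val) n = 1 ∧
      σ (((j - 1 : ℕ) : ZMod n)) = σ 1 * ((j - 1 : ℕ) : ZMod n) ∧
      σ (((k - 1 : ℕ) : ZMod n)) = σ 1 * ((k - 1 : ℕ) : ZMod n) ∧
      σ (((k - 1 : ℕ) : ZMod n)) - σ (((j - 1 : ℕ) : ZMod n)) =
        σ 1 * (((k - 1 : ℕ) : ZMod n) - ((j - 1 : ℕ) : ZMod n)) := by
  set ν : Perm (ZMod n) := μ⁻¹ * Equiv.addRight 1 * μ with hν_def
  have hν : permAct ν (cubicMRS n 2 3) = cubicMRS n 2 3 := permAct_inv_mul_addRight_one_mul_eq_self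
    (hμ _ ⟨2, 3, by norm_num, by omega, by norm_num, by omega, by norm_num, rfl⟩)
  obtain ⟨c, hc⟩ : ∃ c, ∀ i, ν i = i + c := by
    refine (eq_add_or_eq_sub_of_permAct_cubicMRS_two_three hn hν).resolve_right ?_
    rintro ⟨c, hc⟩
    have hinvol : ν (ν 0) = 0 := by rw [hc, hc, sub_sub_cancel]
    simp only [hν_def, Perm.mul_apply, Perm.coe_inv, coe_addRight, apply_symm_apply,
      symm_apply_eq] at hinvol
    have h2 : (2 : ZMod n) ≠ 0 := by
      exact_mod_cast ZMod.natCast_ne_zero_of_lt (n := n) (a := 2) two_ne_zero (by omega)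
    exact h2 (by linear_combination hinvol)
  obtain ⟨u, hu⟩ := exists_unit_apply_eq_mul_add (μ := μ) (c := c) fun i => by
    simpa [hν_def] using (congrArg μ (hc i)).symm
  refine ⟨Units.mulLeft u,
    (permAct_eq_permAct_mulLeft (rotSym_cubicMRS j k) hu).symm.trans hact, by simp, by simp,
    by simpa using ZMod.val_coe_unit_coprime u, by simp, by simp, by simp [mul_sub]⟩

/-- If `μ` preserves rotation symmetry and maps the cubic MRS function `(1,j,k)` to
`(1,p,q)` (in `n > 4` variables), then there is a permutation `σ` doing the same with
`σ(1) = 1`, satisfying `σ(i) = ((i-1)(σ(2)-1)+1) Mod n` for all `i`, with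
`gcd(σ(2)-1, n) = 1`, and such that the pattern of the term `[1, σ(j), σ(k)]` is
`(σ(2)-1)(j-1; k-1; k-j)` mod `n`.  In the 0-indexed coordinates used here
(`σ 1` plays the role of `σ(2) - 1`, and `(j-1 : ZMod n)` the role of subscript `j`),
these conditions read as below. -/
theorem exists_sigma_of_permEquiv (n j k p q : ℕ) [NeZero n] (hn : 4 < n)
    (hj : 1 < j) (hjn : j ≤ n) (hk : 1 < k) (hkn : k ≤ n) (hjk : j ≠ k)
    (hp : 1 < p) (hpn : p ≤ n) (hq : 1 < q) (hqn : q ≤ n) (hpq : p ≠ q)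
    (μ : Equiv.Perm (ZMod n)) (hμ : preservesRS n μ)
    (hact : permAct μ (cubicMRS n j k) = cubicMRS n p q) :
    ∃ σ : Equiv.Perm (ZMod n),
      permAct σ (cubicMRS n j k) = cubicMRS n p q ∧
      σ 0 = 0 ∧
      (∀ i : ZMod n, σ i = σ 1 * i) ∧
      Nat.gcd ((σ 1).val) n = 1 ∧
      σ (((j - 1 : ℕ) : ZMod n)) = σ 1 * ((j - 1 : ℕ) : ZMod n) ∧
      σ (((k - 1 : ℕ) : ZMod n)) = σ 1 * ((k - 1 : ℕ) : ZMod n) ∧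
      σ (((k - 1 : ℕ) : ZMod n)) - σ (((j - 1 : ℕ) : ZMod n)) =
        σ 1 * (((k - 1 : ℕ) : ZMod n) - ((j - 1 : ℕ) : ZMod n)) :=
  exists_sigma_of_permEquiv_general n j k p q hn μ hμ hact
end

section
/- Let n > 8. If τ satisfies gcd(τ, n) = 1 and σ_{τ,n}·(1,2,4) = (1,2,4), then τ ≡ 1 (mod n). Consequently the orbit of the cubic MRS function (1,2,4) under the action of G_n has exactly φ(n) elements, where φ is Euler's totient function. -/
/-- The permutation `σ_{τ,n} : i ↦ ((i-1)τ + 1) Mod n` of the variables, for `τ` a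
unit mod `n`; in the 0-indexed coordinates used here it is `i ↦ τ·i` on `ZMod n`. -/
def sigmaPerm {n : ℕ} (u : (ZMod n)ˣ) : Equiv.Perm (ZMod n) where
  toFun := fun i => (u : ZMod n) * i
  invFun := fun i => ((u⁻¹ : (ZMod n)ˣ) : ZMod n) * i
  left_inv := fun i => by simp [← mul_assoc]
  right_inv := fun i => by simp [← mul_assoc]

/-- The orbit of a Boolean function `f` under the action of the group
`G_n = {σ_{τ,n} : gcd(τ,n) = 1}`. -/
def orbit (n : ℕ) [NeZero n] (f : BF n) : Set (BF n) :=
  {g | ∃ u : (ZMod n)ˣ, g = permAct (sigmaPerm u) f}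

/-- The set of orbits of the action of `G_n` on the set `C_n` of cubic MRS functions. -/
def orbitsOn (n : ℕ) [NeZero n] : Set (Set (BF n)) :=
  {S | ∃ f ∈ cubicSet n, S = orbit n f}

/-! Test both functions on the indicator `x` of `{0, 1, 3}`, the support of the monomial
`x₁x₂x₄`. The value of `σ_τ·(1,2,4)` at `x` is the parity of the number of `a` with
`a, a + τ, a + 3τ ∈ {0, 1, 3}`. Lifting these points to integers `α, β, γ ∈ {0, 1, 3}` gives
`n ∣ 3β - 2α - γ`, and `|3β - 2α - γ| ≤ 9`; for `n > 8` a check of the cases leaves only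
`a = 0`, `τ = 1`. So `σ_τ·(1,2,4)` and `(1,2,4)` differ at `x` unless `τ = 1`: the stabilizer is
trivial and the orbit is in bijection with `G_n`. -/

lemma eq_of_dvd_three_mul_sub {n α β γ : ℤ} (hn : 9 ≤ n) (hα : α ∈ ({0, 1, 3} : Set ℤ))
    (hβ : β ∈ ({0, 1, 3} : Set ℤ)) (hγ : γ ∈ ({0, 1, 3} : Set ℤ))
    (h : n ∣ 3 * β - 2 * α - γ) : (α = 0 ∧ β = 1) ∨ β = α ∨ γ = α := by
  have hsmall : 3 * β - 2 * α - γ = 0 ∨ n ≤ |3 * β - 2 * α - γ| := by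
    by_contra! hne
    exact hne.1 (Int.eq_zero_of_abs_lt_dvd h hne.2)
  simp only [Set.mem_insert_iff, Set.mem_singleton_iff] at hα hβ hγ
  rw [le_abs'] at hsmall
  omega

def support124 (n : ℕ) : Set (ZMod n) := ((↑) : ℤ → ZMod n) '' {0, 1, 3}

lemma triple_mem_support124_iff {n : ℕ} (hn : 8 < n) {a c : ZMod n} (hc : IsUnit c) :
    (a ∈ support124 n ∧ a + c ∈ support124 n ∧ a + 3 * c ∈ support124 n) ↔ a = 0 ∧ c = 1 := by
  constructor
  · rintro ⟨⟨α, hα, rfl⟩, ⟨β, hβ, hac⟩, ⟨γ, hγ, hac3⟩⟩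
    have hc_eq : c = β - α := by rw [hac]; ring
    have hdvd : (n : ℤ) ∣ 3 * β - 2 * α - γ := by
      rw [← ZMod.intCast_zmod_eq_zero_iff_dvd]
      push_cast
      linear_combination 3 * hac - hac3
    rcases eq_of_dvd_three_mul_sub (by omega) hα hβ hγ hdvd with ⟨rfl, rfl⟩ | rfl | rfl
    · simp [hc_eq]
    · have : Fact (1 < n) := ⟨by omega⟩
      exact absurd (hc_eq ▸ hc) (by simp)
    · -- `3 * c = 0` forces `n ∣ 3`, since `c` is a unit
      have h3 : ((3 : ℕ) : ZMod n) = 0 := by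
        rw [← hc.mul_left_eq_zero]
        push_cast
        linear_combination -hac3
      have := Nat.le_of_dvd (by norm_num) ((ZMod.natCast_eq_zero_iff 3 n).mp h3)
      omega
  · rintro ⟨rfl, rfl⟩
    refine ⟨⟨0, by simp⟩, ⟨1, by simp⟩, ⟨3, by simp, by push_cast; ring⟩⟩

lemma permAct_sigmaPerm_cubicMRS_apply {n : ℕ} [NeZero n] (u : (ZMod n)ˣ) (j k : ℕ)
    (x : ZMod n → ZMod 2) :
    permAct (sigmaPerm u) (cubicMRS n j k) x =
      ∑ i, x i * x (i + u * ((j - 1 : ℕ) : ZMod n)) * x (i + u * ((k - 1 : ℕ) : ZMod n)) := by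
  simp only [permAct, cubicMRS, sigmaPerm, Equiv.coe_fn_mk, mul_add]
  exact Fintype.sum_equiv (sigmaPerm u) _ _ fun i => rfl

lemma permAct_sigmaPerm_cubicMRS_124_indicator {n : ℕ} [NeZero n] (hn : 8 < n)
    (u : (ZMod n)ˣ) :
    permAct (sigmaPerm u) (cubicMRS n 2 4) ((support124 n).indicator 1) =
      if u = 1 then 1 else 0 := by
  have hterm : ∀ i : ZMod n,
      (support124 n).indicator 1 i * (support124 n).indicator 1 (i + u) *
          (support124 n).indicator 1 (i + 3 * u) =
        if i = 0 ∧ (u : ZMod n) = 1 then (1 : ZMod 2) else 0 := by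
    intro i
    classical
    have := triple_mem_support124_iff hn (a := i) u.isUnit
    simp only [Set.indicator_apply, Pi.one_apply]
    split_ifs <;> simp_all
  rw [permAct_sigmaPerm_cubicMRS_apply]
  norm_num [mul_comm _ (3 : ZMod n), hterm, ite_and]

lemma permAct_sigmaPerm_mul {n : ℕ} (u v : (ZMod n)ˣ) (f : BF n) :
    permAct (sigmaPerm u) (permAct (sigmaPerm v) f) = permAct (sigmaPerm (u * v)) f := by
  funext x
  simp only [permAct, sigmaPerm, Equiv.coe_fn_mk, Units.val_mul, mul_assoc]

lemma permAct_sigmaPerm_one {n : ℕ} (f : BF n) : permAct (sigmaPerm 1) f = f := by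
  funext x
  simp [permAct, sigmaPerm]

lemma permAct_sigmaPerm_cubicMRS_124_eq_iff {n : ℕ} [NeZero n] (hn : 8 < n)
    (u : (ZMod n)ˣ) : permAct (sigmaPerm u) (cubicMRS n 2 4) = cubicMRS n 2 4 ↔ u = 1 := by
  refine ⟨fun h => ?_, fun h => h ▸ permAct_sigmaPerm_one _⟩
  have hx := congrFun h ((support124 n).indicator 1)
  rw [← permAct_sigmaPerm_one (cubicMRS n 2 4), permAct_sigmaPerm_mul, mul_one,
    permAct_sigmaPerm_cubicMRS_124_indicator hn,
    permAct_sigmaPerm_cubicMRS_124_indicator hn] at hx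
  simpa using hx

lemma permAct_sigmaPerm_cubicMRS_124_injective {n : ℕ} [NeZero n] (hn : 8 < n) :
    Function.Injective fun u : (ZMod n)ˣ => permAct (sigmaPerm u) (cubicMRS n 2 4) := by
  intro u v (huv : permAct _ _ = permAct _ _)
  have h : permAct (sigmaPerm (v⁻¹ * u)) (cubicMRS n 2 4) = cubicMRS n 2 4 := by
    rw [← permAct_sigmaPerm_mul, huv, permAct_sigmaPerm_mul, inv_mul_cancel, permAct_sigmaPerm_one]
  exact (inv_mul_eq_one.mp ((permAct_sigmaPerm_cubicMRS_124_eq_iff hn _).mp h)).symm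

/-- For `n > 8`: if `gcd(τ,n) = 1` and `σ_{τ,n}` fixes the cubic MRS function `(1,2,4)`,
then `τ ≡ 1 (mod n)`; consequently the orbit of `(1,2,4)` under the action of `G_n` has
exactly `φ(n)` elements. -/
theorem stabilizer_of_124_trivial (n : ℕ) [NeZero n] (hn : 8 < n) :
    (∀ (τ : ℕ) (h : Nat.Coprime τ n),
      permAct (sigmaPerm (ZMod.unitOfCoprime τ h)) (cubicMRS n 2 4) = cubicMRS n 2 4 →
        τ ≡ 1 [MOD n]) ∧
    (orbit n (cubicMRS n 2 4)).ncard = Nat.totient n := by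
  refine ⟨fun τ h hfix => ?_, ?_⟩
  · have hτ : (τ : ZMod n) = 1 := by
      rw [← ZMod.coe_unitOfCoprime τ h, (permAct_sigmaPerm_cubicMRS_124_eq_iff hn _).mp hfix,
        Units.val_one]
    exact (ZMod.natCast_eq_natCast_iff τ 1 n).mp (by rw [hτ, Nat.cast_one])
  · have horbit : orbit n (cubicMRS n 2 4) =
        Set.range fun u : (ZMod n)ˣ => permAct (sigmaPerm u) (cubicMRS n 2 4) := by
      ext g
      simp [orbit, eq_comm]
    rw [horbit, Set.ncard_range_of_injective (permAct_sigmaPerm_cubicMRS_124_injective hn),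
      Nat.card_eq_fintype_card, ZMod.card_units_eq_totient]
end

section
/- Let p > 5 be prime. Among the orbits of the action of G_p on C_p: there is exactly one orbit of size (p−1)/2, namely the orbit containing (1,2,3); if p ≡ 1 (mod 6), there is exactly one orbit of size (p−1)/3, and all the remaining E(p) − 2 orbits have size p − 1; if p ≡ 5 (mod 6), all the remaining E(p) − 1 orbits have size p − 1. -/
/-! The function `x ↦ Σᵢ xᵢ x_{i+a} x_{i+b}` on `ZMod p` determines the triangle `{0, a, b}` up to
translation: at the indicator function of a triangle it counts, mod 2, the translates of
`{0, a, b}` contained in that triangle, and for `p > 3` the only translate of `{0, a, b}` contained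
in `{0, a, b}` is itself. As `σ_τ` multiplies triangles by `τ`, every orbit contains a function
with triangle `{0, 1, t}`, and its stabilizer consists of the `τ` such that `τ • {0, 1, t}` is a
translate of `{0, 1, t}`. Besides `1` these are `-1` when `{0, 1, t}` is an arithmetic progression
(which happens exactly in the orbit of `(1,2,3)`), and the two primitive cube roots of unity when
`t² - t + 1 = 0`; this equation has roots iff `3 ∣ p - 1`, and its two roots `t`, `1 - t` give the
same orbit. The orbit–stabilizer theorem then gives the sizes. -/

open Finset

abbrev sigmaAction (n : ℕ) : MulAction (ZMod n)ˣ (BF n) where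
  smul u f := permAct (sigmaPerm u) f
  one_smul f := by
    change permAct (sigmaPerm 1) f = f
    funext x
    simp [permAct, sigmaPerm]
  mul_smul u v f := by
    change permAct (sigmaPerm (u * v)) f = permAct (sigmaPerm u) (permAct (sigmaPerm v) f)
    funext x
    simp [permAct, sigmaPerm, mul_assoc]

attribute [local instance] sigmaAction

section General

variable {n : ℕ}

theorem natCast_ne_natCast_of_lt {m m' : ℕ} (hm : m < n) (hm' : m' < n) (h : m ≠ m') :
    (m : ZMod n) ≠ m' := by
  rwa [Ne, ZMod.natCast_eq_natCast_iff', Nat.mod_eq_of_lt hm, Nat.mod_eq_of_lt hm']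

variable [NeZero n]

def cubicRS (a b : ZMod n) : BF n :=
  fun x => ∑ i, x i * x (i + a) * x (i + b)

theorem cubicMRS_eq_cubicRS (j k : ℕ) :
    cubicMRS n j k = cubicRS ((j - 1 : ℕ) : ZMod n) ((k - 1 : ℕ) : ZMod n) := rfl

theorem cubicMRS_two_three : cubicMRS n 2 3 = cubicRS 1 2 := by
  rw [cubicMRS_eq_cubicRS]
  norm_num

theorem cubicRS_comm (a b : ZMod n) : cubicRS a b = cubicRS b a := by
  funext x
  exact Finset.sum_congr rfl fun i _ => by ring

theorem cubicRS_neg_sub (a b : ZMod n) : cubicRS a b = cubicRS (-a) (b - a) := by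
  funext x
  exact Fintype.sum_equiv (Equiv.addRight a) _ _ fun i => by
    simp only [Equiv.coe_addRight, add_neg_cancel_right, add_add_sub_cancel]
    ring

theorem smul_cubicRS (u : (ZMod n)ˣ) (a b : ZMod n) :
    u • cubicRS a b = cubicRS (u * a : ZMod n) (u * b) := by
  funext x
  exact Fintype.sum_equiv (sigmaPerm u) _ _ fun i => by simp [sigmaPerm, mul_add]

theorem cubicRS_apply_indicator (a b : ZMod n) (S : Finset (ZMod n)) :
    cubicRS a b (fun i => if i ∈ S then 1 else 0) = #{i | i ∈ S ∧ i + a ∈ S ∧ i + b ∈ S} := by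
  simp only [cubicRS, ite_zero_mul_ite_zero, mul_one, ← and_assoc]
  rw [Finset.sum_boole]

theorem orbit_eq_mulAction_orbit (f : BF n) : orbit n f = MulAction.orbit (ZMod n)ˣ f := by
  ext g
  exact exists_congr fun u => eq_comm

theorem ncard_orbit_mul_card_stabilizer (f : BF n) :
    (orbit n f).ncard * Nat.card (MulAction.stabilizer (ZMod n)ˣ f) = n.totient := by
  rw [orbit_eq_mulAction_orbit, ← MulAction.index_stabilizer, Subgroup.index_mul_card,
    Nat.card_eq_fintype_card, ZMod.card_units_eq_totient]

theorem orbit_cubicRS_units_mul (u : (ZMod n)ˣ) (t : ZMod n) :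
    orbit n (cubicRS u (u * t)) = orbit n (cubicRS 1 t) := by
  have h : cubicRS (u : ZMod n) (u * t) = u • cubicRS 1 t := by rw [smul_cubicRS, mul_one]
  rw [h, orbit_eq_mulAction_orbit, orbit_eq_mulAction_orbit, MulAction.orbit_smul]

theorem orbit_cubicRS_one_sub (t : ZMod n) :
    orbit n (cubicRS 1 (1 - t)) = orbit n (cubicRS 1 t) := by
  rw [← orbit_cubicRS_units_mul (-1) t, cubicRS_neg_sub]
  simp [sub_eq_neg_add]

theorem orbit_cubicRS_one_mem_orbitsOn {t : ZMod n} (ht0 : t ≠ 0) (ht1 : t ≠ 1) :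
    orbit n (cubicRS 1 t) ∈ orbitsOn n := by
  have hv0 : t.val ≠ 0 := fun h => ht0 ((ZMod.val_eq_zero t).1 h)
  have hv1 : t.val ≠ 1 := fun h => ht1 (by rw [← ZMod.natCast_zmod_val t, h, Nat.cast_one])
  refine ⟨cubicRS 1 t, ⟨2, t.val + 1, by norm_num, by omega, ZMod.val_lt t, ?_⟩, rfl⟩
  rw [cubicMRS_eq_cubicRS, Nat.add_sub_cancel, ZMod.natCast_zmod_val]
  norm_num

end General

theorem translate_mem_triangle_cases {G : Type*} [AddCommGroup G] {a b c d i : G}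
    (hc : c ≠ 0) (hd : d ≠ 0) (hcd : c ≠ d)
    (h1 : i = 0 ∨ i = a ∨ i = b)
    (h2 : i + c = 0 ∨ i + c = a ∨ i + c = b)
    (h3 : i + d = 0 ∨ i + d = a ∨ i + d = b) :
    (i = 0 ∧ ((c = a ∧ d = b) ∨ (c = b ∧ d = a))) ∨
    (i = -c ∧ ((c = -a ∧ d = b - a) ∨ (c = -b ∧ d = a - b))) ∨
    (i = -d ∧ ((d = -a ∧ c = b - a) ∨ (d = -b ∧ c = a - b))) := by
  rcases h1 with rfl | rfl | rfl <;> rcases h2 with h2 | h2 | h2 <;>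
    rcases h3 with h3 | h3 | h3 <;> grind

section Triangles

variable {R : Type*} [CommRing R]

abbrev IsArithProgTriple (t : R) : Prop := t = -1 ∨ t = 2 ∨ 2 * t = 1

-- Over `ℂ` these are the `t` making `{0, 1, t}` equilateral; here `-t` is a primitive cube root of
-- unity.
abbrev IsEquilateralTriple (t : R) : Prop := t * t - t + 1 = 0

-- The `u` for which `u • {0, 1, t}` is a translate of `{0, 1, t}`.
def triangleMultipliers (t : R) : Set R :=
  {x | x = 1 ∨ (x = -1 ∧ IsArithProgTriple t) ∨ ((x = t - 1 ∨ x = -t) ∧ IsEquilateralTriple t)}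

theorem mem_triangleMultipliers_iff [NoZeroDivisors R] {t x : R} (ht0 : t ≠ 0) (ht1 : t ≠ 1) :
    x ∈ triangleMultipliers t ↔
      (x = 1 ∧ x * t = t) ∨ (x = t ∧ x * t = 1) ∨ (x = -1 ∧ x * t = t - 1) ∨
        (x = t - 1 ∧ x * t = -1) ∨ (x = -t ∧ x * t = 1 - t) ∨ (x = 1 - t ∧ x * t = -t) := by
  constructor
  · rintro (rfl | ⟨rfl, rfl | rfl | h⟩ | ⟨rfl | rfl, h⟩)
    · exact Or.inl ⟨rfl, one_mul t⟩
    · exact Or.inr (Or.inl ⟨rfl, by ring⟩)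
    · exact Or.inr (Or.inr (Or.inr (Or.inr (Or.inr ⟨by ring, by ring⟩))))
    · exact Or.inr (Or.inr (Or.inl ⟨rfl, by linear_combination -h⟩))
    · exact Or.inr (Or.inr (Or.inr (Or.inl ⟨rfl, by linear_combination h⟩)))
    · exact Or.inr (Or.inr (Or.inr (Or.inr (Or.inl ⟨rfl, by linear_combination -h⟩))))
  · rintro (⟨rfl, -⟩ | ⟨rfl, h⟩ | ⟨rfl, h⟩ | ⟨rfl, h⟩ | ⟨rfl, h⟩ | ⟨rfl, h⟩)
    · exact Or.inl rfl
    · have ht : x = -1 := (mul_self_eq_one_iff.1 h).resolve_left ht1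
      exact Or.inr (Or.inl ⟨ht, Or.inl ht⟩)
    · exact Or.inr (Or.inl ⟨rfl, Or.inr (Or.inr (by linear_combination -h))⟩)
    · exact Or.inr (Or.inr ⟨Or.inl rfl, by linear_combination h⟩)
    · exact Or.inr (Or.inr ⟨Or.inr rfl, by linear_combination -h⟩)
    · have ht : t = 2 := sub_eq_zero.1 <|
        (mul_eq_zero.1 (by linear_combination -h : t * (t - 2) = 0)).resolve_left ht0
      exact Or.inr (Or.inl ⟨by rw [ht]; ring, Or.inr (Or.inl ht)⟩)

theorem not_isEquilateralTriple_of_isArithProgTriple {t : R} (h3 : (3 : R) ≠ 0)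
    (h : IsArithProgTriple t) : ¬IsEquilateralTriple t := by
  intro hE
  apply h3
  rcases h with rfl | rfl | h
  · linear_combination hE
  · linear_combination hE
  · linear_combination 4 * hE - (2 * t - 1) * h

theorem IsEquilateralTriple.ne_zero [Nontrivial R] {t : R} (hE : IsEquilateralTriple t) :
    t ≠ 0 := by
  rintro rfl
  exact one_ne_zero (by linear_combination hE)

theorem IsEquilateralTriple.ne_one [Nontrivial R] {t : R} (hE : IsEquilateralTriple t) : t ≠ 1 := by
  rintro rfl
  exact one_ne_zero (by linear_combination hE)

theorem triangleMultipliers_of_generic {t : R} (hA : ¬IsArithProgTriple t)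
    (hE : ¬IsEquilateralTriple t) : triangleMultipliers t = {1} := by
  ext x
  simp [triangleMultipliers, hA, hE]

theorem triangleMultipliers_of_isArithProgTriple {t : R} (h3 : (3 : R) ≠ 0)
    (hA : IsArithProgTriple t) : triangleMultipliers t = {1, -1} := by
  ext x
  simp [triangleMultipliers, hA, not_isEquilateralTriple_of_isArithProgTriple h3 hA]

theorem triangleMultipliers_of_isEquilateralTriple {t : R} (h3 : (3 : R) ≠ 0)
    (hE : IsEquilateralTriple t) : triangleMultipliers t = {1, t - 1, -t} := by
  have hA : ¬IsArithProgTriple t := fun hA => not_isEquilateralTriple_of_isArithProgTriple h3 hA hE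
  ext x
  simp [triangleMultipliers, hA, and_iff_left hE]

end Triangles

section Prime

variable {p : ℕ} [Fact p.Prime]

theorem filter_translate_mem_triangle_eq {a b : ZMod p} (h2 : (2 : ZMod p) ≠ 0)
    (h3 : (3 : ZMod p) ≠ 0) (ha : a ≠ 0) (hb : b ≠ 0) (hab : a ≠ b) :
    ({i | i ∈ ({0, a, b} : Finset (ZMod p)) ∧ i + a ∈ ({0, a, b} : Finset (ZMod p)) ∧
      i + b ∈ ({0, a, b} : Finset (ZMod p))} : Finset (ZMod p)) = {0} := by
  ext i
  simp only [mem_filter, mem_univ, true_and, mem_insert, mem_singleton]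
  refine ⟨fun ⟨m1, m2, m3⟩ => ?_, by rintro rfl; simp⟩
  rcases translate_mem_triangle_cases ha hb hab m1 m2 m3 with ⟨hi, -⟩ | ⟨-, h⟩ | ⟨-, h⟩
  · exact hi
  all_goals grind

theorem cubicRS_eq_cubicRS_iff {a b c d : ZMod p} (h2 : (2 : ZMod p) ≠ 0)
    (h3 : (3 : ZMod p) ≠ 0) (ha : a ≠ 0) (hb : b ≠ 0) (hab : a ≠ b) (hc : c ≠ 0) (hd : d ≠ 0)
    (hcd : c ≠ d) :
    cubicRS c d = cubicRS a b ↔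
      (c = a ∧ d = b) ∨ (c = b ∧ d = a) ∨ (c = -a ∧ d = b - a) ∨ (c = b - a ∧ d = -a) ∨
        (c = -b ∧ d = a - b) ∨ (c = a - b ∧ d = -b) := by
  constructor
  · intro h
    set T : Finset (ZMod p) := {0, a, b}
    have hodd := congrFun h fun i => if i ∈ T then 1 else 0
    rw [cubicRS_apply_indicator, cubicRS_apply_indicator,
      filter_translate_mem_triangle_eq h2 h3 ha hb hab, card_singleton, Nat.cast_one] at hodd
    obtain ⟨i, hi⟩ : ({i | i ∈ T ∧ i + c ∈ T ∧ i + d ∈ T} : Finset (ZMod p)).Nonempty := by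
      rw [nonempty_iff_ne_empty]
      intro hempty
      simp [hempty] at hodd
    simp only [T, mem_filter, mem_univ, true_and, mem_insert, mem_singleton] at hi
    obtain ⟨m1, m2, m3⟩ := hi
    rcases translate_mem_triangle_cases hc hd hcd m1 m2 m3 with
      ⟨-, h | h⟩ | ⟨-, h | h⟩ | ⟨-, h | h⟩ <;> simp [h]
  · rintro (⟨rfl, rfl⟩ | ⟨rfl, rfl⟩ | ⟨rfl, rfl⟩ | ⟨rfl, rfl⟩ | ⟨rfl, rfl⟩ | ⟨rfl, rfl⟩)
    · rfl
    · exact cubicRS_comm _ _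
    · exact (cubicRS_neg_sub _ _).symm
    · rw [cubicRS_comm, ← cubicRS_neg_sub]
    · exact (cubicRS_neg_sub _ _).symm.trans (cubicRS_comm _ _)
    · rw [cubicRS_comm, ← cubicRS_neg_sub, cubicRS_comm]

theorem coe_stabilizer_cubicRS {t : ZMod p} (h2 : (2 : ZMod p) ≠ 0) (h3 : (3 : ZMod p) ≠ 0)
    (ht0 : t ≠ 0) (ht1 : t ≠ 1) :
    (MulAction.stabilizer (ZMod p)ˣ (cubicRS 1 t) : Set (ZMod p)ˣ) =
      Units.val ⁻¹' triangleMultipliers t := by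
  ext u
  have hut : (u : ZMod p) ≠ u * t := fun h => ht1 (mul_eq_left₀ u.ne_zero |>.1 h.symm)
  rw [SetLike.mem_coe, MulAction.mem_stabilizer_iff, smul_cubicRS, mul_one, Set.mem_preimage,
    mem_triangleMultipliers_iff ht0 ht1, cubicRS_eq_cubicRS_iff h2 h3 one_ne_zero ht0
      (Ne.symm ht1) u.ne_zero (mul_ne_zero u.ne_zero ht0) hut]

theorem triangleMultipliers_subset_range_val {t : ZMod p} (ht0 : t ≠ 0) (ht1 : t ≠ 1) :
    triangleMultipliers t ⊆ Set.range ((↑) : (ZMod p)ˣ → ZMod p) := by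
  intro x hx
  suffices x ≠ 0 from ⟨Units.mk0 x this, rfl⟩
  rintro rfl
  rcases hx with h | ⟨h, -⟩ | ⟨h | h, -⟩
  · exact zero_ne_one h
  · exact zero_ne_one (neg_eq_zero.1 h.symm).symm
  · exact ht1 (sub_eq_zero.1 h.symm)
  · exact ht0 (neg_eq_zero.1 h.symm)

theorem ncard_orbit_mul_ncard_triangleMultipliers {t : ZMod p} (h2 : (2 : ZMod p) ≠ 0)
    (h3 : (3 : ZMod p) ≠ 0) (ht0 : t ≠ 0) (ht1 : t ≠ 1) :
    (orbit p (cubicRS 1 t)).ncard * (triangleMultipliers t).ncard = p - 1 := by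
  rw [← Set.ncard_preimage_of_injective_subset_range Units.val_injective
    (triangleMultipliers_subset_range_val ht0 ht1), ← coe_stabilizer_cubicRS h2 h3 ht0 ht1,
    ← Nat.card_coe_set_eq]
  exact (ncard_orbit_mul_card_stabilizer _).trans (Nat.totient_prime Fact.out)

theorem ncard_orbit_cubicRS_of_generic {t : ZMod p} (h2 : (2 : ZMod p) ≠ 0)
    (h3 : (3 : ZMod p) ≠ 0) (ht0 : t ≠ 0) (ht1 : t ≠ 1) (hA : ¬IsArithProgTriple t)
    (hE : ¬IsEquilateralTriple t) : (orbit p (cubicRS 1 t)).ncard = p - 1 := by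
  simpa [triangleMultipliers_of_generic hA hE] using
    ncard_orbit_mul_ncard_triangleMultipliers h2 h3 ht0 ht1

theorem two_mul_ncard_orbit_cubicRS_of_isArithProgTriple {t : ZMod p} (h2 : (2 : ZMod p) ≠ 0)
    (h3 : (3 : ZMod p) ≠ 0) (ht0 : t ≠ 0) (ht1 : t ≠ 1) (hA : IsArithProgTriple t) :
    2 * (orbit p (cubicRS 1 t)).ncard = p - 1 := by
  have hne : (1 : ZMod p) ≠ -1 := fun h => h2 (by linear_combination h)
  rw [mul_comm, ← Set.ncard_pair hne, ← triangleMultipliers_of_isArithProgTriple h3 hA]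
  exact ncard_orbit_mul_ncard_triangleMultipliers h2 h3 ht0 ht1

theorem three_mul_ncard_orbit_cubicRS_of_isEquilateralTriple {t : ZMod p}
    (h2 : (2 : ZMod p) ≠ 0) (h3 : (3 : ZMod p) ≠ 0) (hE : IsEquilateralTriple t) :
    3 * (orbit p (cubicRS 1 t)).ncard = p - 1 := by
  have hA (h : IsArithProgTriple t) : False :=
    not_isEquilateralTriple_of_isArithProgTriple h3 h hE
  have hcard : (triangleMultipliers t).ncard = 3 := by
    rw [triangleMultipliers_of_isEquilateralTriple h3 hE, Set.ncard_eq_three]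
    exact ⟨1, t - 1, -t, fun h => hA (Or.inr (Or.inl (by linear_combination -h))),
      fun h => hA (Or.inl (by linear_combination h)),
      fun h => hA (Or.inr (Or.inr (by linear_combination h))), rfl⟩
  rw [mul_comm, ← hcard]
  exact ncard_orbit_mul_ncard_triangleMultipliers h2 h3 hE.ne_zero hE.ne_one

theorem orbit_cubicRS_one_inv {t : ZMod p} (ht0 : t ≠ 0) :
    orbit p (cubicRS 1 t⁻¹) = orbit p (cubicRS 1 t) := by
  rw [← orbit_cubicRS_units_mul (Units.mk0 t⁻¹ (inv_ne_zero ht0)) t, Units.val_mk0,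
    inv_mul_cancel₀ ht0, cubicRS_comm]

theorem orbit_cubicRS_of_isArithProgTriple {t : ZMod p} (hA : IsArithProgTriple t) :
    orbit p (cubicRS 1 t) = orbit p (cubicRS 1 2) := by
  rcases hA with rfl | rfl | h
  · rw [← orbit_cubicRS_one_sub]
    norm_num
  · rfl
  · rw [← orbit_cubicRS_one_inv (left_ne_zero_of_mul_eq_one (mul_comm 2 t ▸ h)),
      inv_eq_of_mul_eq_one_left h]

theorem orbit_cubicRS_eq_of_isEquilateralTriple {s t : ZMod p} (hs : IsEquilateralTriple s)
    (ht : IsEquilateralTriple t) : orbit p (cubicRS 1 s) = orbit p (cubicRS 1 t) := by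
  rcases mul_eq_zero.1 (by linear_combination hs - ht : (s - t) * (s + t - 1) = 0) with h | h
  · rw [sub_eq_zero.1 h]
  · rw [show s = 1 - t by linear_combination h, orbit_cubicRS_one_sub]

theorem exists_isEquilateralTriple_iff (h3 : (3 : ZMod p) ≠ 0) :
    (∃ t : ZMod p, IsEquilateralTriple t) ↔ 3 ∣ p - 1 := by
  rw [← ZMod.card_units p]
  constructor
  · rintro ⟨t, ht⟩
    let ω : (ZMod p)ˣ := Units.mk0 (-t) (neg_ne_zero.2 ht.ne_zero)
    have hω : orderOf ω = 3 := by
      refine orderOf_eq_prime (Units.ext ?_) fun h => h3 ?_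
      · simp only [ω, Units.val_pow_eq_pow_val, Units.val_mk0, Units.val_one]
        linear_combination (-(t + 1)) * ht
      · have : -t = 1 := by simpa [ω] using congrArg Units.val h
        linear_combination ht + (t - 2) * this
    exact hω ▸ orderOf_dvd_card
  · intro h
    obtain ⟨ω, hω⟩ := exists_prime_orderOf_dvd_card 3 h
    have hω3 : (ω : ZMod p) ^ 3 = 1 := by
      rw [← Units.val_pow_eq_pow_val, ← hω, pow_orderOf_eq_one, Units.val_one]
    have hω1 : (ω : ZMod p) - 1 ≠ 0 := by
      refine sub_ne_zero.2 fun h => ?_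
      rw [Units.val_eq_one.1 h, orderOf_one] at hω
      exact absurd hω (by norm_num)
    refine ⟨-ω, (mul_eq_zero.1 ?_).resolve_left hω1⟩
    linear_combination hω3

theorem exists_eq_orbit_cubicRS_one {S : Set (BF p)} (hS : S ∈ orbitsOn p) :
    ∃ t : ZMod p, t ≠ 0 ∧ t ≠ 1 ∧ S = orbit p (cubicRS 1 t) := by
  obtain ⟨f, ⟨j, k, hj, hjk, hk, rfl⟩, rfl⟩ := hS
  set a : ZMod p := ((j - 1 : ℕ) : ZMod p)
  set b : ZMod p := ((k - 1 : ℕ) : ZMod p)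
  have ha : a ≠ 0 := by
    simpa using natCast_ne_natCast_of_lt (m' := 0) (by omega : j - 1 < p) (by omega) (by omega)
  have hb : b ≠ 0 := by
    simpa using natCast_ne_natCast_of_lt (m' := 0) (by omega : k - 1 < p) (by omega) (by omega)
  have hab : a ≠ b := natCast_ne_natCast_of_lt (by omega) (by omega) (by omega)
  refine ⟨a⁻¹ * b, mul_ne_zero (inv_ne_zero ha) hb, fun h => hab ((inv_mul_eq_one₀ ha).1 h), ?_⟩
  rw [cubicMRS_eq_cubicRS, ← orbit_cubicRS_units_mul (Units.mk0 a ha), Units.val_mk0,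
    mul_inv_cancel_left₀ ha]

theorem orbitsOn_cases (h2 : (2 : ZMod p) ≠ 0) (h3 : (3 : ZMod p) ≠ 0) {S : Set (BF p)}
    (hS : S ∈ orbitsOn p) :
    (S = orbit p (cubicRS 1 2) ∧ 2 * S.ncard = p - 1) ∨
      (∃ t, IsEquilateralTriple t ∧ S = orbit p (cubicRS 1 t) ∧ 3 * S.ncard = p - 1) ∨
      S.ncard = p - 1 := by
  obtain ⟨t, ht0, ht1, rfl⟩ := exists_eq_orbit_cubicRS_one hS
  by_cases hA : IsArithProgTriple t
  · exact Or.inl ⟨orbit_cubicRS_of_isArithProgTriple hA,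
      two_mul_ncard_orbit_cubicRS_of_isArithProgTriple h2 h3 ht0 ht1 hA⟩
  by_cases hE : IsEquilateralTriple t
  · exact Or.inr (Or.inl
      ⟨t, hE, rfl, three_mul_ncard_orbit_cubicRS_of_isEquilateralTriple h2 h3 hE⟩)
  · exact Or.inr (Or.inr (ncard_orbit_cubicRS_of_generic h2 h3 ht0 ht1 hA hE))

theorem ncard_eq_of_mem_orbitsOn (h2 : (2 : ZMod p) ≠ 0) (h3 : (3 : ZMod p) ≠ 0)
    {S : Set (BF p)} (hS : S ∈ orbitsOn p) (hne : S ≠ orbit p (cubicRS 1 2))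
    (hE : ∀ t, IsEquilateralTriple t → S ≠ orbit p (cubicRS 1 t)) : S.ncard = p - 1 := by
  rcases orbitsOn_cases h2 h3 hS with ⟨h, -⟩ | ⟨t, ht, h, -⟩ | h
  exacts [absurd h hne, absurd h (hE t ht), h]

end Prime

/-- For a prime `p > 5`: there is exactly one orbit of size `(p-1)/2`, namely the orbit
of `(1,2,3)`; if `p ≡ 1 (mod 6)` there is exactly one orbit of size `(p-1)/3` and all
other orbits have size `p-1`; if `p ≡ 5 (mod 6)` all orbits other than that of `(1,2,3)`
have size `p-1`. -/
theorem orbit_sizes_prime (p : ℕ) [NeZero p] (hp : p.Prime) (h5 : 5 < p) :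
    ({S | S ∈ orbitsOn p ∧ S.ncard = (p - 1) / 2} = {orbit p (cubicMRS p 2 3)}) ∧
    (p % 6 = 1 →
      ∃ T : Set (BF p),
        {S | S ∈ orbitsOn p ∧ S.ncard = (p - 1) / 3} = {T} ∧
        ∀ S ∈ orbitsOn p, S ≠ orbit p (cubicMRS p 2 3) → S ≠ T → S.ncard = p - 1) ∧
    (p % 6 = 5 →
      ∀ S ∈ orbitsOn p, S ≠ orbit p (cubicMRS p 2 3) → S.ncard = p - 1) := by
  have : Fact p.Prime := ⟨hp⟩
  have h2 : (2 : ZMod p) ≠ 0 := by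
    exact_mod_cast natCast_ne_natCast_of_lt (m := 2) (m' := 0) (by omega) (by omega) (by omega)
  have h3 : (3 : ZMod p) ≠ 0 := by
    exact_mod_cast natCast_ne_natCast_of_lt (m := 3) (m' := 0) (by omega) (by omega) (by omega)
  have h21 : (2 : ZMod p) ≠ 1 := by
    exact_mod_cast natCast_ne_natCast_of_lt (m := 2) (m' := 1) (by omega) (by omega) (by omega)
  have hcard₂ := two_mul_ncard_orbit_cubicRS_of_isArithProgTriple h2 h3 h2 h21 (Or.inr (Or.inl rfl))
  rw [cubicMRS_two_three]
  refine ⟨?_, fun h6 => ?_, fun h6 S hS hne => ?_⟩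
  · refine Set.eq_singleton_iff_unique_mem.2
      ⟨⟨orbit_cubicRS_one_mem_orbitsOn h2 h21, by omega⟩, fun S ⟨hS, hcard⟩ => ?_⟩
    rcases orbitsOn_cases h2 h3 hS with ⟨rfl, -⟩ | ⟨-, -, -, h⟩ | h
    · rfl
    all_goals omega
  · obtain ⟨t₀, ht₀⟩ := (exists_isEquilateralTriple_iff h3).2 (by omega)
    have hcard₀ := three_mul_ncard_orbit_cubicRS_of_isEquilateralTriple h2 h3 ht₀
    refine ⟨orbit p (cubicRS 1 t₀), Set.eq_singleton_iff_unique_mem.2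
      ⟨⟨orbit_cubicRS_one_mem_orbitsOn ht₀.ne_zero ht₀.ne_one, by omega⟩,
        fun S ⟨hS, hcard⟩ => ?_⟩, fun S hS hne hneT => ?_⟩
    · rcases orbitsOn_cases h2 h3 hS with ⟨-, h⟩ | ⟨t, ht, rfl, -⟩ | h
      · omega
      · exact orbit_cubicRS_eq_of_isEquilateralTriple ht ht₀
      · omega
    · exact ncard_eq_of_mem_orbitsOn h2 h3 hS hne fun t ht h =>
        hneT (h.trans (orbit_cubicRS_eq_of_isEquilateralTriple ht ht₀))
  · exact ncard_eq_of_mem_orbitsOn h2 h3 hS hne fun t ht _ =>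
      absurd ((exists_isEquilateralTriple_iff h3).1 ⟨t, ht⟩) (by omega)
end

section
/- Let p be a prime and let (1,j,k) be any cubic MRS function in p variables (1 < j < k ≤ p). Then there exist an integer τ not divisible by p and an integer m with 2 < m ≤ p such that σ_{τ,p}·(1,j,k) = (1,2,m). In particular, every orbit of the action of G_p on C_p contains a function of the form (1,2,m) with m > 2. -/
/-!
Relabelling the variables by `σ_u : i ↦ u·i` turns `(1,j,k)` into the MRS function whose
offsets are `u(j-1)` and `u(k-1)`: reindex the defining sum along `σ_u`. Over the field
`ZMod p` the offsets `a = j-1` and `b = k-1` are nonzero and distinct, so `u = a⁻¹` gives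
offsets `1` and `a⁻¹b ∉ {0, 1}`, i.e. the function `(1,2,m)` with `m - 1 = a⁻¹b`.
-/

theorem ZMod.natCast_ne_natCast_of_lt {n a b : ℕ} (ha : a < n) (hb : b < n) (hab : a ≠ b) :
    (a : ZMod n) ≠ b := by
  rwa [Ne, ZMod.natCast_eq_natCast_iff', Nat.mod_eq_of_lt ha, Nat.mod_eq_of_lt hb]

theorem ZMod.unitOfCoprime_val_coe {n : ℕ} [NeZero n] (u : (ZMod n)ˣ) :
    ZMod.unitOfCoprime (u : ZMod n).val (ZMod.val_coe_unit_coprime u) = u :=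
  Units.ext (by rw [ZMod.coe_unitOfCoprime, ZMod.natCast_zmod_val])

theorem permAct_sigmaPerm_cubicMRS {n : ℕ} [NeZero n] (u : (ZMod n)ˣ) {j k j' k' : ℕ}
    (hj : (u : ZMod n) * ((j - 1 : ℕ) : ZMod n) = ((j' - 1 : ℕ) : ZMod n))
    (hk : (u : ZMod n) * ((k - 1 : ℕ) : ZMod n) = ((k' - 1 : ℕ) : ZMod n)) :
    permAct (sigmaPerm u) (cubicMRS n j k) = cubicMRS n j' k' := by
  funext x
  simp only [permAct, cubicMRS, sigmaPerm, Equiv.coe_fn_mk, mul_add, hj, hk]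
  exact Equiv.sum_comp (sigmaPerm u) fun i => x i * x (i + _) * x (i + _)

theorem exists_permAct_sigmaPerm_cubicMRS_eq_cubicMRS_two {p : ℕ} [Fact p.Prime] {j k : ℕ}
    (hj : 1 < j) (hjk : j < k) (hk : k ≤ p) :
    ∃ (u : (ZMod p)ˣ) (m : ℕ), 2 < m ∧ m ≤ p ∧
      permAct (sigmaPerm u) (cubicMRS p j k) = cubicMRS p 2 m := by
  set a : ZMod p := ((j - 1 : ℕ) : ZMod p)
  set b : ZMod p := ((k - 1 : ℕ) : ZMod p)
  have ha : a ≠ 0 := by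
    simpa using ZMod.natCast_ne_natCast_of_lt (n := p) (b := 0) (by omega) (by omega) (by omega)
  have hb : b ≠ 0 := by
    simpa using ZMod.natCast_ne_natCast_of_lt (n := p) (b := 0) (by omega) (by omega) (by omega)
  have hab : a ≠ b := ZMod.natCast_ne_natCast_of_lt (by omega) (by omega) (by omega)
  set c := a⁻¹ * b
  have hc0 : c.val ≠ 0 := by
    rw [Ne, ZMod.val_eq_zero]
    exact mul_ne_zero (inv_ne_zero ha) hb
  have hc1 : c.val ≠ 1 := by
    rw [Ne, ZMod.val_eq_one (Fact.out : p.Prime).one_lt, inv_mul_eq_one₀ ha]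
    exact hab
  refine ⟨(Units.mk0 a ha)⁻¹, c.val + 1, by omega, c.val_lt, ?_⟩
  apply permAct_sigmaPerm_cubicMRS
  · simpa using inv_mul_cancel₀ ha
  · rw [Nat.add_sub_cancel, ZMod.natCast_zmod_val]
    rfl

/-- For a prime `p` and any cubic MRS function `(1,j,k)` in `p` variables, there are
`τ` not divisible by `p` and `m` with `2 < m ≤ p` such that
`σ_{τ,p}·(1,j,k) = (1,2,m)`.  In particular every orbit of the action of `G_p` on `C_p`
contains a function of the form `(1,2,m)` with `m > 2`. -/
theorem orbit_contains_12m (p : ℕ) [NeZero p] (hp : p.Prime)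
    (j k : ℕ) (hj : 1 < j) (hjk : j < k) (hk : k ≤ p) :
    ∃ (τ : ℕ) (h : Nat.Coprime τ p) (m : ℕ), ¬ (p ∣ τ) ∧ 2 < m ∧ m ≤ p ∧
      permAct (sigmaPerm (ZMod.unitOfCoprime τ h)) (cubicMRS p j k) = cubicMRS p 2 m := by
  have : Fact p.Prime := ⟨hp⟩
  obtain ⟨u, m, hm2, hmp, hu⟩ := exists_permAct_sigmaPerm_cubicMRS_eq_cubicMRS_two hj hjk hk
  refine ⟨(u : ZMod p).val, ZMod.val_coe_unit_coprime u, m, ?_, hm2, hmp, ?_⟩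
  · exact hp.coprime_iff_not_dvd.mp (ZMod.val_coe_unit_coprime u).symm
  · rwa [ZMod.unitOfCoprime_val_coe]
end

section
/- Let p ≡ 1 (mod 6) be prime. Then: σ_{τ,p} has order 3 in G_p if and only if τ³ ≡ 1 (mod p) and τ ≢ 1 (mod p); there are exactly two elements of order 3 in G_p, and they are of the form σ_k and σ_{k² Mod p} for an integer k with 1 < k < p satisfying k³ ≡ 1 (mod p); both of these permutations fix the cubic MRS function (1, 2, k+2), and the orbit of (1, 2, k+2) under G_p has exactly (p−1)/3 elements. -/
/-!
The map `u ↦ σ_u` is an injective homomorphism from the cyclic group `(ZMod p)ˣ` of order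
`p - 1`, so for `3 ∣ p - 1` there are exactly two permutations `σ_g`, `σ_{g²}` of order 3.
With `c = g` (so `c² + c + 1 = 0`) the function `(1, 2, k + 2)` is `Σᵢ xᵢ x_{i+1} x_{i+c+1}`,
a sum over the translates of the triangle `{0, 1, c + 1}`. Multiplication by `c` maps this
triangle onto one of its translates, so `σ_g` fixes the function. Conversely, if `σ_w` fixes
it, evaluating at the indicator of the triangle shows that a translate of `w • {0, 1, c + 1}`
lies inside `{0, 1, c + 1}`, which forces `w ∈ {1, c, c²}`. So the stabiliser is `⟨g⟩`, of
order 3, and orbit–stabiliser gives an orbit of size `(p - 1) / 3`.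
-/

def sigmaHom (n : ℕ) : (ZMod n)ˣ →* Equiv.Perm (ZMod n) where
  toFun := sigmaPerm
  map_one' := by ext i; simp [sigmaPerm]
  map_mul' u v := by ext i; simp [sigmaPerm, mul_assoc]

lemma sigmaHom_injective (n : ℕ) : Function.Injective (sigmaHom n) := fun u v h =>
  Units.ext (by simpa [sigmaHom, sigmaPerm] using congrArg (· 1) h)

lemma orderOf_sigmaPerm {n : ℕ} (u : (ZMod n)ˣ) : orderOf (sigmaPerm u) = orderOf u :=
  orderOf_injective (sigmaHom n) (sigmaHom_injective n) u

lemma unitOfCoprime_pow_eq_one_iff {n τ : ℕ} (h : τ.Coprime n) (m : ℕ) :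
    ZMod.unitOfCoprime τ h ^ m = 1 ↔ τ ^ m ≡ 1 [MOD n] := by
  rw [← ZMod.natCast_eq_natCast_iff, Units.ext_iff]
  push_cast [ZMod.coe_unitOfCoprime]
  rfl

lemma orderOf_unitOfCoprime_eq_three_iff {n τ : ℕ} (h : τ.Coprime n) :
    orderOf (ZMod.unitOfCoprime τ h) = 3 ↔ τ ^ 3 ≡ 1 [MOD n] ∧ ¬ τ ≡ 1 [MOD n] := by
  rw [orderOf_eq_prime_iff, unitOfCoprime_pow_eq_one_iff, ne_eq,
    ← pow_one (ZMod.unitOfCoprime τ h), unitOfCoprime_pow_eq_one_iff, pow_one]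

lemma IsCyclic.orderOf_eq_three_iff {G : Type*} [Group G] [Fintype G] [IsCyclic G] {g : G}
    (hg : orderOf g = 3) {u : G} : orderOf u = 3 ↔ u = g ∨ u = g ^ 2 := by
  classical
  have hg2 : orderOf (g ^ 2) = 3 := by
    rw [Nat.Coprime.orderOf_pow (by rw [hg]; norm_num), hg]
  have hne : g ≠ g ^ 2 := by
    intro h
    rw [sq, left_eq_mul] at h
    simp [h] at hg
  have hpair : ({g, g ^ 2} : Finset G) = ({a | orderOf a = 3} : Finset G) := by
    refine Finset.eq_of_subset_of_card_le (by simp [Finset.insert_subset_iff, hg, hg2]) ?_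
    rw [IsCyclic.card_orderOf_eq_totient (hg ▸ orderOf_dvd_card), Finset.card_pair hne]
    decide
  simpa using congrArg (u ∈ ·) hpair.symm

lemma setOf_sigmaPerm_orderOf_eq_three {n : ℕ} [NeZero n] [IsCyclic (ZMod n)ˣ] {g : (ZMod n)ˣ}
    (hg : orderOf g = 3) :
    {σ : Equiv.Perm (ZMod n) | (∃ u : (ZMod n)ˣ, σ = sigmaPerm u) ∧ orderOf σ = 3} =
      {sigmaPerm g, sigmaPerm (g ^ 2)} := by
  ext σ
  simp only [Set.mem_ofPred_eq, Set.mem_insert_iff, Set.mem_singleton_iff]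
  constructor
  · rintro ⟨⟨u, rfl⟩, hu⟩
    rw [orderOf_sigmaPerm, IsCyclic.orderOf_eq_three_iff hg] at hu
    rcases hu with rfl | rfl <;> simp
  · rintro (rfl | rfl) <;>
      exact ⟨⟨_, rfl⟩, by rw [orderOf_sigmaPerm, IsCyclic.orderOf_eq_three_iff hg]; simp⟩

lemma sq_add_self_add_one_eq_zero_of_orderOf_eq_three {R : Type*} [CommRing R] [IsDomain R]
    {g : Rˣ} (hg : orderOf g = 3) : (g : R) ^ 2 + g + 1 = 0 ∧ (g : R) ≠ 1 := by
  have hcube : (g : R) ^ 3 = 1 := by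
    rw [← Units.val_pow_eq_pow_val, ← hg, pow_orderOf_eq_one, Units.val_one]
  have hne : (g : R) ≠ 1 := fun h => by simp [Units.val_eq_one.mp h] at hg
  have hfactor : ((g : R) - 1) * ((g : R) ^ 2 + g + 1) = 0 := by linear_combination hcube
  exact ⟨(mul_eq_zero.mp hfactor).resolve_left (sub_ne_zero.mpr hne), hne⟩

section CubicForm

variable {n : ℕ} [NeZero n]

def cubicForm (a b d : ZMod n) : BF n :=
  fun x => ∑ i, x (i + a) * x (i + b) * x (i + d)

lemma cubicMRS_two_eq_cubicForm (k : ℕ) :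
    cubicMRS n 2 (k + 2) = cubicForm 0 1 ((k : ZMod n) + 1) := by
  funext x
  simp only [cubicMRS, cubicForm, add_zero, show 2 - 1 = 1 from rfl,
    show k + 2 - 1 = k + 1 from rfl, Nat.cast_add, Nat.cast_one]

lemma cubicForm_add_const (a b d t : ZMod n) :
    cubicForm (a + t) (b + t) (d + t) = cubicForm a b d := by
  funext x
  exact Fintype.sum_equiv (Equiv.addRight t) _ _ fun i => by
    simp only [Equiv.coe_addRight, add_assoc, add_comm t]

lemma cubicForm_rotate (a b d : ZMod n) : cubicForm a b d = cubicForm b d a := by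
  funext x
  exact Finset.sum_congr rfl fun i _ => by ring

lemma permAct_sigmaPerm_cubicForm (u : (ZMod n)ˣ) (a b d : ZMod n) :
    permAct (sigmaPerm u) (cubicForm a b d) = cubicForm ((u : ZMod n) * a) (u * b) (u * d) := by
  funext x
  exact Fintype.sum_equiv (sigmaPerm u) _ _ fun i => by
    simp only [sigmaPerm, Equiv.coe_fn_mk, mul_add]

open Finset in
lemma cubicForm_indicator (a b d : ZMod n) (S : Finset (ZMod n)) :
    cubicForm a b d (fun i => if i ∈ S then 1 else 0) =
      #{i | i + a ∈ S ∧ i + b ∈ S ∧ i + d ∈ S} := by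
  simp only [cubicForm, ite_zero_mul_ite_zero, mul_one, ← and_assoc, Finset.sum_boole]

end CubicForm

lemma eq_of_add_mul_mem_triangle {R : Type*} [CommRing R] [IsDomain R] [DecidableEq R]
    {c a w : R} (hc : c ^ 2 + c + 1 = 0) (hc1 : c ≠ 1) (hw : w ≠ 0)
    (h₀ : a ∈ ({0, 1, c + 1} : Finset R)) (h₁ : a + w ∈ ({0, 1, c + 1} : Finset R))
    (h₂ : a + w * (c + 1) ∈ ({0, 1, c + 1} : Finset R)) :
    w = 1 ∧ a = 0 ∨ w = c ∧ a = 1 ∨ w = c ^ 2 ∧ a = c + 1 := by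
  simp only [Finset.mem_insert, Finset.mem_singleton] at h₀ h₁ h₂
  grind

lemma permAct_sigmaPerm_cubicForm_triangle {n : ℕ} [NeZero n] {c : ZMod n}
    (hc : c ^ 2 + c + 1 = 0) {u : (ZMod n)ˣ} (hu : (u : ZMod n) = c) :
    permAct (sigmaPerm u) (cubicForm 0 1 (c + 1)) = cubicForm 0 1 (c + 1) :=
  -- multiplication by `c` sends the triangle `{0, 1, c + 1}` to its translate `{0, c, -1}`
  calc permAct (sigmaPerm u) (cubicForm 0 1 (c + 1))
      = cubicForm (c * (c + 1)) (c * 0) (c * 1) := by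
        rw [permAct_sigmaPerm_cubicForm, hu, cubicForm_rotate, cubicForm_rotate]
    _ = cubicForm (0 + -1) (1 + -1) (c + 1 + -1) := by
        congr 1
        · linear_combination hc
        all_goals ring
    _ = cubicForm 0 1 (c + 1) := cubicForm_add_const 0 1 (c + 1) (-1)

open Finset in
lemma eq_of_permAct_sigmaPerm_cubicForm_triangle {p : ℕ} [Fact p.Prime] {c : ZMod p}
    (hc : c ^ 2 + c + 1 = 0) (hc1 : c ≠ 1) {w : (ZMod p)ˣ}
    (hw : permAct (sigmaPerm w) (cubicForm 0 1 (c + 1)) = cubicForm 0 1 (c + 1)) :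
    (w : ZMod p) = 1 ∨ (w : ZMod p) = c ∨ (w : ZMod p) = c ^ 2 := by
  set T : Finset (ZMod p) := {0, 1, c + 1}
  -- at the indicator of `T`, both sides count (mod 2) the translates of `w • T`, resp. `T`,
  -- that lie inside `T`
  have hcount := congrFun hw fun i => if i ∈ T then 1 else 0
  simp only [permAct_sigmaPerm_cubicForm, cubicForm_indicator, mul_zero, mul_one,
    add_zero] at hcount
  have hself : #{i | i ∈ T ∧ i + 1 ∈ T ∧ i + (c + 1) ∈ T} = 1 := by
    refine card_eq_one.mpr
      ⟨0, eq_singleton_iff_unique_mem.mpr ⟨by simp [T], fun i hi => ?_⟩⟩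
    simp only [mem_filter, mem_univ, true_and] at hi
    have := eq_of_add_mul_mem_triangle hc hc1 one_ne_zero hi.1 hi.2.1
      (by rw [one_mul]; exact hi.2.2)
    grind
  obtain ⟨i, hi⟩ :
      ({i | i ∈ T ∧ i + w ∈ T ∧ i + w * (c + 1) ∈ T} : Finset (ZMod p)).Nonempty := by
    rw [← card_ne_zero]
    rintro h
    simp [h, hself] at hcount
  simp only [mem_filter, mem_univ, true_and] at hi
  have := eq_of_add_mul_mem_triangle hc hc1 (Units.ne_zero w) hi.1 hi.2.1 hi.2.2
  tauto

instance (n : ℕ) : MulAction (ZMod n)ˣ (BF n) where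
  smul u f := permAct (sigmaPerm u) f
  one_smul f := by
    change permAct (sigmaHom n 1) f = f
    rw [map_one]
    rfl
  mul_smul u v f := by
    change permAct (sigmaHom n (u * v)) f = permAct (sigmaHom n u) (permAct (sigmaHom n v) f)
    rw [map_mul]
    rfl

lemma smul_eq_permAct {n : ℕ} (u : (ZMod n)ˣ) (f : BF n) : u • f = permAct (sigmaPerm u) f :=
  rfl

lemma orbit_eq_mulActionOrbit {n : ℕ} [NeZero n] (f : BF n) :
    orbit n f = MulAction.orbit (ZMod n)ˣ f := by
  ext h
  simp [orbit, MulAction.mem_orbit_iff, smul_eq_permAct, eq_comm]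

lemma stabilizer_cubicForm_triangle {p : ℕ} [Fact p.Prime] {g : (ZMod p)ˣ}
    (hg : orderOf g = 3) :
    MulAction.stabilizer (ZMod p)ˣ (cubicForm 0 1 ((g : ZMod p) + 1)) = Subgroup.zpowers g := by
  obtain ⟨hc, hc1⟩ := sq_add_self_add_one_eq_zero_of_orderOf_eq_three hg
  refine le_antisymm (fun w hw => ?_) (Subgroup.zpowers_le.mpr ?_)
  · rcases eq_of_permAct_sigmaPerm_cubicForm_triangle hc hc1 hw with h | h | h
    · rw [Units.val_eq_one.mp h]
      exact one_mem _
    · rw [Units.val_inj.mp h]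
      exact Subgroup.mem_zpowers g
    · rw [← Units.val_pow_eq_pow_val, Units.val_inj] at h
      exact h ▸ pow_mem (Subgroup.mem_zpowers g) 2
  · exact permAct_sigmaPerm_cubicForm_triangle hc rfl

lemma ncard_orbit_cubicForm_triangle {p : ℕ} [Fact p.Prime] {g : (ZMod p)ˣ}
    (hg : orderOf g = 3) :
    (orbit p (cubicForm 0 1 ((g : ZMod p) + 1))).ncard = (p - 1) / 3 := by
  have h := (MulAction.stabilizer (ZMod p)ˣ (cubicForm 0 1 ((g : ZMod p) + 1))).index_mul_card
  rw [MulAction.index_stabilizer, stabilizer_cubicForm_triangle hg, Nat.card_zpowers, hg,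
    Nat.card_eq_fintype_card, ZMod.card_units] at h
  rw [orbit_eq_mulActionOrbit]
  omega

/-- For a prime `p ≡ 1 (mod 6)`: `σ_{τ,p}` has order 3 iff `τ³ ≡ 1` and `τ ≢ 1 (mod p)`;
there are exactly two elements of order 3 in `G_p`, namely `σ_k` and `σ_{k² Mod p}` for
an integer `1 < k < p` with `k³ ≡ 1 (mod p)`; both fix the cubic MRS function
`(1,2,k+2)`, whose orbit under `G_p` has exactly `(p-1)/3` elements. -/
theorem order_three_elements (p : ℕ) [NeZero p] (hp : p.Prime) (h1 : p % 6 = 1) :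
    (∀ (τ : ℕ) (h : Nat.Coprime τ p),
      orderOf (sigmaPerm (ZMod.unitOfCoprime τ h)) = 3 ↔
        (τ ^ 3 ≡ 1 [MOD p] ∧ ¬ τ ≡ 1 [MOD p])) ∧
    (∃ (k : ℕ) (hk : Nat.Coprime k p), 1 < k ∧ k < p ∧ k ^ 3 ≡ 1 [MOD p] ∧
      {σ : Equiv.Perm (ZMod p) |
          (∃ u : (ZMod p)ˣ, σ = sigmaPerm u) ∧ orderOf σ = 3} =
        {sigmaPerm (ZMod.unitOfCoprime k hk),
          sigmaPerm ((ZMod.unitOfCoprime k hk) ^ 2)} ∧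
      permAct (sigmaPerm (ZMod.unitOfCoprime k hk)) (cubicMRS p 2 (k + 2)) =
        cubicMRS p 2 (k + 2) ∧
      permAct (sigmaPerm ((ZMod.unitOfCoprime k hk) ^ 2)) (cubicMRS p 2 (k + 2)) =
        cubicMRS p 2 (k + 2) ∧
      (orbit p (cubicMRS p 2 (k + 2))).ncard = (p - 1) / 3) := by
  have := Fact.mk hp
  obtain ⟨g, hg⟩ : ∃ g : (ZMod p)ˣ, orderOf g = 3 :=
    exists_prime_orderOf_dvd_card 3 (by rw [ZMod.card_units]; omega)
  obtain ⟨-, hg1⟩ := sq_add_self_add_one_eq_zero_of_orderOf_eq_three hg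
  set k := (g : ZMod p).val
  have hk : k.Coprime p := ZMod.val_coe_unit_coprime g
  have hgk : ZMod.unitOfCoprime k hk = g := Units.ext (by simp [k, ZMod.coe_unitOfCoprime])
  have hf : cubicMRS p 2 (k + 2) = cubicForm 0 1 ((g : ZMod p) + 1) := by
    rw [cubicMRS_two_eq_cubicForm, ZMod.natCast_zmod_val]
  have hfix : ∀ u ∈ Subgroup.zpowers g,
      permAct (sigmaPerm u) (cubicMRS p 2 (k + 2)) = cubicMRS p 2 (k + 2) := fun u hu => by
    rw [hf]
    exact (stabilizer_cubicForm_triangle hg).ge hu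
  have hk_gt : 1 < k := by
    have hk_ne_zero : k ≠ 0 := (ZMod.val_ne_zero _).mpr (Units.ne_zero g)
    have hk_ne_one : k ≠ 1 := fun h => hg1 ((ZMod.val_eq_one hp.one_lt _).mp h)
    omega
  refine ⟨fun τ h => by rw [orderOf_sigmaPerm, orderOf_unitOfCoprime_eq_three_iff], k, hk, hk_gt,
    ZMod.val_lt _, ?_, ?_, ?_, ?_, hf ▸ ncard_orbit_cubicForm_triangle hg⟩
  · rw [← unitOfCoprime_pow_eq_one_iff hk, hgk, ← hg, pow_orderOf_eq_one]
  · rw [hgk, setOf_sigmaPerm_orderOf_eq_three hg]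
  · exact hgk ▸ hfix g (Subgroup.mem_zpowers g)
  · exact hgk ▸ hfix _ (pow_mem (Subgroup.mem_zpowers g) 2)
end
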